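/- arXiv:q-alg/9708003 — 9 statements merged into one kernel-verified Lean document; each statement's English description precedes it below -/
import Mathlib

section
/- For all natural numbers s,t, the commutators of the generators with the symmetrized powers are given by [a₊, S_A(s,t)] = −ε·(s+t)·S_A(s−1,t) whenever s ≥ 1, and [a₋, S_A(s,t)] = ε·(s+t)·S_A(s,t−1) whenever t ≥ 1. -/
open MvPolynomial

noncomputable section

/-- The polynomial ring ℂ[x,y]. -/
abbrev P2 : Type := MvPolynomial (Fin 2) ℂ

/-- The algebra of ℂ-linear endomorphisms of ℂ[x,y]. -/
abbrev E : Type := Module.End ℂ P2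

/-- `a₊` : multiplication by `x`. -/
def aP : E := LinearMap.mulLeft ℂ (X 0 : P2)

/-- `b₊` : multiplication by `y`. -/
def bP : E := LinearMap.mulLeft ℂ (X 1 : P2)

/-- `a₋ = ε ∂/∂x`. -/
def aM (ε : ℝ) : E := (ε : ℂ) • (pderiv (0 : Fin 2)).toLinearMap

/-- `b₋ = ε ∂/∂y`. -/
def bM (ε : ℝ) : E := (ε : ℂ) • (pderiv (1 : Fin 2)).toLinearMap

def J0 (ε : ℝ) : E := (1/2 : ℂ) • (aP * aM ε - bP * bM ε)
def Jp (ε : ℝ) : E := aP * bM ε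
def Jm (ε : ℝ) : E := aM ε * bP
def K0 (ε : ℝ) : E := (1/2 : ℂ) • (aP * aM ε + bP * bM ε + (ε : ℂ) • (1 : E))
def Kp : E := aP * bP
def Km (ε : ℝ) : E := aM ε * bM ε

/-- `S_A(s,t)` : the sum over all distinct words consisting of `s` letters `a₋` and
`t` letters `a₊` of the ordered composition of the letters (coefficient 1). A word is
encoded by the set `A` of positions (among `s+t`) carrying the letter `a₊`. -/
def SA (ε : ℝ) (s t : ℕ) : E :=
  ∑ A ∈ Finset.powersetCard t (Finset.univ : Finset (Fin (s + t))),
    (List.ofFn fun i : Fin (s + t) => if i ∈ A then aP else aM ε).prod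

/-- `S_B(u,v)` : the analogous symmetrization in the letters `b₋`, `b₊`. -/
def SB (ε : ℝ) (u v : ℕ) : E :=
  ∑ A ∈ Finset.powersetCard v (Finset.univ : Finset (Fin (u + v))),
    (List.ofFn fun i : Fin (u + v) => if i ∈ A then bP else bM ε).prod

/-- `S(s,t,u,v)` : the sum over all distinct arrangements of `s` letters `a₋`,
`t` letters `a₊`, `u` letters `b₋` and `v` letters `b₊` of the ordered composition
of the letters (each arrangement counted once, coefficient 1). An arrangement is
encoded by a function `f : Fin (s+t+u+v) → Fin 4` with fibers of the right sizes. -/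
def Sgen (ε : ℝ) (s t u v : ℕ) : E :=
  ∑ f ∈ (Finset.univ : Finset (Fin (s + t + u + v) → Fin 4)).filter
      (fun f =>
        (Finset.univ.filter fun i => f i = 0).card = s ∧
        (Finset.univ.filter fun i => f i = 1).card = t ∧
        (Finset.univ.filter fun i => f i = 2).card = u ∧
        (Finset.univ.filter fun i => f i = 3).card = v),
    (List.ofFn fun i : Fin (s + t + u + v) => ![aM ε, aP, bM ε, bP] (f i)).prod

lemma comm_aP_aM (ε : ℝ) : aP * aM ε - aM ε * aP = (-(ε:ℂ)) • 1 := by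
  apply LinearMap.ext; intro p
  simp only [aP, aM, LinearMap.sub_apply, Module.End.mul_apply, LinearMap.smul_apply,
    LinearMap.mulLeft_apply, Module.End.one_apply, neg_smul, Derivation.coeFn_coe]
  have : (pderiv (0 : Fin 2)) (X 0 * p) = p + X 0 * (pderiv (0 : Fin 2)) p := by
    rw [pderiv_mul, pderiv_X_self, one_mul]
  rw [this, mul_smul_comm]
  simp [smul_add]

lemma comm_aM_aP (ε : ℝ) : aM ε * aP - aP * aM ε = ((ε:ℂ)) • 1 := by
  rw [show aM ε * aP - aP * aM ε = -(aP * aM ε - aM ε * aP) by abel, comm_aP_aM]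
  apply LinearMap.ext; intro p
  simp

lemma ofFn_step {n : ℕ} (f : Fin (n+2) → E) (j : Fin (n+1)) :
    (List.ofFn fun k : Fin (n+1) => f (j.succ.succAbove k)).prod
      = f 0 * (List.ofFn fun k : Fin n => f ((j.succAbove k).succ)).prod := by
  rw [List.ofFn_succ, List.prod_cons]
  simp [Fin.succ_succAbove_succ, Fin.succ_succAbove_zero]

lemma comm_ofFn_prod : ∀ {n : ℕ} (x : E) (f : Fin (n+1) → E) (c : Fin (n+1) → ℂ),
    (∀ i, x * f i - f i * x = c i • 1) →
    x * (List.ofFn f).prod - (List.ofFn f).prod * x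
      = ∑ i : Fin (n+1), c i • (List.ofFn (fun j : Fin n => f (i.succAbove j))).prod := by
  intro n
  induction n with
  | zero =>
    intro x f c h
    simp only [List.ofFn_succ, List.ofFn_zero, List.prod_cons, List.prod_nil, mul_one]
    rw [Fin.sum_univ_one]
    simpa using h 0
  | succ n ih =>
    intro x f c h
    rw [List.ofFn_succ, List.prod_cons, Fin.sum_univ_succ]
    have key := ih x (fun j => f j.succ) (fun j => c j.succ) (fun j => h j.succ)
    have e1 : x * (f 0 * (List.ofFn fun j : Fin (n+1) => f j.succ).prod)
          - f 0 * (List.ofFn fun j : Fin (n+1) => f j.succ).prod * x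
        = (x * f 0 - f 0 * x) * (List.ofFn fun j : Fin (n+1) => f j.succ).prod
          + f 0 * (x * (List.ofFn fun j : Fin (n+1) => f j.succ).prod
              - (List.ofFn fun j : Fin (n+1) => f j.succ).prod * x) := by
      simp only [sub_mul, mul_sub, mul_assoc]
      abel
    rw [e1, h 0, key, smul_mul_assoc, one_mul, Finset.mul_sum]
    congr 1
    apply Finset.sum_congr rfl
    intro j _
    rw [mul_smul_comm]
    congr 1
    rw [ofFn_step]

def emb {n : ℕ} (i : Fin (n+1)) : Fin n ↪ Fin (n+1) :=
  ⟨i.succAbove, Fin.succAbove_right_injective⟩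

lemma mem_map_emb {n : ℕ} (i : Fin (n+1)) (B : Finset (Fin n)) (j : Fin n) :
    i.succAbove j ∈ B.map (emb i) ↔ j ∈ B := by
  simp [emb, Finset.mem_map, Fin.succAbove_right_injective.eq_iff]

lemma not_mem_map_emb {n : ℕ} (i : Fin (n+1)) (B : Finset (Fin n)) :
    i ∉ B.map (emb i) := by
  simp only [Finset.mem_map, emb, Function.Embedding.coeFn_mk]
  rintro ⟨k, -, hk⟩
  exact Fin.succAbove_ne i k hk

lemma preimage_map_emb {n : ℕ} (i : Fin (n+1)) (A : Finset (Fin (n+1))) (hi : i ∉ A) :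
    (A.preimage i.succAbove Fin.succAbove_right_injective.injOn).map (emb i) = A := by
  ext j
  simp only [Finset.mem_map, Finset.mem_preimage, emb, Function.Embedding.coeFn_mk]
  constructor
  · rintro ⟨k, hk, rfl⟩; exact hk
  · intro hj
    obtain ⟨k, rfl⟩ := Fin.exists_succAbove_eq (show j ≠ i from fun h => hi (h ▸ hj))
    exact ⟨k, hj, rfl⟩

lemma filter_not_mem_eq_map {n t : ℕ} (i : Fin (n+1)) :
    (Finset.powersetCard t (Finset.univ : Finset (Fin (n+1)))).filter (fun A => i ∉ A)
      = (Finset.powersetCard t (Finset.univ : Finset (Fin n))).map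
          ⟨fun B => B.map (emb i), fun B B' h => Finset.map_injective _ h⟩ := by
  ext A
  simp only [Finset.mem_filter, Finset.mem_powersetCard_univ, Finset.mem_map,
    Function.Embedding.coeFn_mk]
  constructor
  · rintro ⟨hcard, hi⟩
    refine ⟨A.preimage i.succAbove Fin.succAbove_right_injective.injOn, ?_,
      preimage_map_emb i A hi⟩
    have := preimage_map_emb i A hi
    conv_rhs => rw [← hcard, ← this, Finset.card_map]
  · rintro ⟨B, hB, rfl⟩
    exact ⟨by show (B.map (emb i)).card = t; rw [Finset.card_map, hB], not_mem_map_emb i B⟩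

lemma filter_mem_eq_map {n t : ℕ} (i : Fin (n+1)) :
    (Finset.powersetCard (t+1) (Finset.univ : Finset (Fin (n+1)))).filter (fun A => i ∈ A)
      = (Finset.powersetCard t (Finset.univ : Finset (Fin n))).map
          ⟨fun B => insert i (B.map (emb i)), by
            intro B B' h
            apply Finset.map_injective (emb i)
            have h2 : insert i (Finset.map (emb i) B) = insert i (Finset.map (emb i) B') := h
            rw [← Finset.erase_insert (not_mem_map_emb i B),
              ← Finset.erase_insert (not_mem_map_emb i B'), h2]⟩ := by
  ext A
  simp only [Finset.mem_filter, Finset.mem_powersetCard_univ, Finset.mem_map,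
    Function.Embedding.coeFn_mk]
  constructor
  · rintro ⟨hcard, hi⟩
    have hie : i ∉ A.erase i := Finset.notMem_erase i A
    refine ⟨(A.erase i).preimage i.succAbove Fin.succAbove_right_injective.injOn, ?_, ?_⟩
    · have := preimage_map_emb i (A.erase i) hie
      have hc : ((A.erase i).preimage i.succAbove
          Fin.succAbove_right_injective.injOn).card = (A.erase i).card := by
        conv_rhs => rw [← this, Finset.card_map]
      rw [hc, Finset.card_erase_of_mem hi, hcard]
      omega
    · show insert i (Finset.map (emb i) _) = A
      rw [preimage_map_emb i (A.erase i) hie, Finset.insert_erase hi]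
  · rintro ⟨B, hB, rfl⟩
    refine ⟨?_, Finset.mem_insert_self i _⟩
    show (insert i (B.map (emb i))).card = t + 1
    rw [Finset.card_insert_of_notMem (not_mem_map_emb i B), Finset.card_map, hB]

def T (ε : ℝ) (n t : ℕ) : E :=
  ∑ A ∈ Finset.powersetCard t (Finset.univ : Finset (Fin n)),
    (List.ofFn fun i : Fin n => if i ∈ A then aP else aM ε).prod

lemma TA (ε : ℝ) (n t : ℕ) :
    aP * T ε (n+1) t - T ε (n+1) t * aP = (-((ε:ℂ) * ((n:ℂ)+1))) • T ε n t := by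
  unfold T
  rw [Finset.mul_sum, Finset.sum_mul, ← Finset.sum_sub_distrib]
  have step1 : ∀ A ∈ Finset.powersetCard t (Finset.univ : Finset (Fin (n+1))),
      aP * (List.ofFn fun i : Fin (n+1) => if i ∈ A then aP else aM ε).prod
        - (List.ofFn fun i : Fin (n+1) => if i ∈ A then aP else aM ε).prod * aP
      = ∑ i : Fin (n+1), (if i ∈ A then (0:ℂ) else -(ε:ℂ)) •
          (List.ofFn fun j : Fin n =>
            if i.succAbove j ∈ A then aP else aM ε).prod := by
    intro A _
    refine comm_ofFn_prod aP _ _ ?_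
    intro i
    by_cases h : i ∈ A
    · simp [h]
    · simpa [h] using comm_aP_aM ε
  rw [Finset.sum_congr rfl step1]
  have step2 : ∀ A : Finset (Fin (n+1)),
      (∑ i : Fin (n+1), (if i ∈ A then (0:ℂ) else -(ε:ℂ)) •
          (List.ofFn fun j : Fin n => if i.succAbove j ∈ A then aP else aM ε).prod)
      = ∑ i ∈ Finset.univ.filter (fun i => i ∉ A), (-(ε:ℂ)) •
          (List.ofFn fun j : Fin n => if i.succAbove j ∈ A then aP else aM ε).prod := by
    intro A
    rw [Finset.sum_filter]
    apply Finset.sum_congr rfl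
    intro i _
    by_cases h : i ∈ A <;> simp [h]
  rw [Finset.sum_congr rfl (fun A _ => step2 A)]
  rw [Finset.sum_comm'
    (s' := fun i => (Finset.powersetCard t Finset.univ).filter (fun A => i ∉ A))
    (t' := Finset.univ) (by intro A i; simp [Finset.mem_filter, and_comm])]
  have step3 : ∀ i : Fin (n+1),
      (∑ A ∈ (Finset.powersetCard t (Finset.univ : Finset (Fin (n+1)))).filter
          (fun A => i ∉ A),
        (-(ε:ℂ)) • (List.ofFn fun j : Fin n =>
          if i.succAbove j ∈ A then aP else aM ε).prod)
      = (-(ε:ℂ)) • T ε n t := by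
    intro i
    rw [filter_not_mem_eq_map i, Finset.sum_map, ← Finset.smul_sum]
    congr 1
    unfold T
    apply Finset.sum_congr rfl
    intro B _
    congr 1
    congr 1
    funext j
    show (if i.succAbove j ∈ B.map (emb i) then aP else aM ε) = _
    simp only [Function.Embedding.coeFn_mk, mem_map_emb]
  rw [Finset.sum_congr rfl (fun i _ => step3 i), Finset.sum_const, Finset.card_univ,
    Fintype.card_fin, ← Nat.cast_smul_eq_nsmul ℂ, smul_smul]
  congr 1
  push_cast
  ring

lemma TB (ε : ℝ) (n t : ℕ) :
    aM ε * T ε (n+1) (t+1) - T ε (n+1) (t+1) * aM ε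
      = ((ε:ℂ) * ((n:ℂ)+1)) • T ε n t := by
  unfold T
  rw [Finset.mul_sum, Finset.sum_mul, ← Finset.sum_sub_distrib]
  have step1 : ∀ A ∈ Finset.powersetCard (t+1) (Finset.univ : Finset (Fin (n+1))),
      aM ε * (List.ofFn fun i : Fin (n+1) => if i ∈ A then aP else aM ε).prod
        - (List.ofFn fun i : Fin (n+1) => if i ∈ A then aP else aM ε).prod * aM ε
      = ∑ i : Fin (n+1), (if i ∈ A then (ε:ℂ) else 0) •
          (List.ofFn fun j : Fin n =>
            if i.succAbove j ∈ A then aP else aM ε).prod := by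
    intro A _
    refine comm_ofFn_prod (aM ε) _ _ ?_
    intro i
    by_cases h : i ∈ A
    · simpa [h] using comm_aM_aP ε
    · simp [h]
  rw [Finset.sum_congr rfl step1]
  have step2 : ∀ A : Finset (Fin (n+1)),
      (∑ i : Fin (n+1), (if i ∈ A then (ε:ℂ) else 0) •
          (List.ofFn fun j : Fin n => if i.succAbove j ∈ A then aP else aM ε).prod)
      = ∑ i ∈ Finset.univ.filter (fun i => i ∈ A), ((ε:ℂ)) •
          (List.ofFn fun j : Fin n => if i.succAbove j ∈ A then aP else aM ε).prod := by
    intro A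
    rw [Finset.sum_filter]
    apply Finset.sum_congr rfl
    intro i _
    by_cases h : i ∈ A <;> simp [h]
  rw [Finset.sum_congr rfl (fun A _ => step2 A)]
  rw [Finset.sum_comm'
    (s' := fun i => (Finset.powersetCard (t+1) Finset.univ).filter (fun A => i ∈ A))
    (t' := Finset.univ) (by intro A i; simp [Finset.mem_filter, and_comm])]
  have step3 : ∀ i : Fin (n+1),
      (∑ A ∈ (Finset.powersetCard (t+1) (Finset.univ : Finset (Fin (n+1)))).filter
          (fun A => i ∈ A),
        ((ε:ℂ)) • (List.ofFn fun j : Fin n =>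
          if i.succAbove j ∈ A then aP else aM ε).prod)
      = ((ε:ℂ)) • T ε n t := by
    intro i
    rw [filter_mem_eq_map i, Finset.sum_map, ← Finset.smul_sum]
    congr 1
    unfold T
    apply Finset.sum_congr rfl
    intro B _
    congr 1
    congr 1
    funext j
    show (if i.succAbove j ∈ insert i (B.map (emb i)) then aP else aM ε) = _
    simp only [Function.Embedding.coeFn_mk, Finset.mem_insert, mem_map_emb]
    have : i.succAbove j ≠ i := Fin.succAbove_ne i j
    simp [this]
  rw [Finset.sum_congr rfl (fun i _ => step3 i), Finset.sum_const, Finset.card_univ,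
    Fintype.card_fin, ← Nat.cast_smul_eq_nsmul ℂ, smul_smul]
  congr 1
  push_cast
  ring

/-- Commutators of the generators with the symmetrized powers:
`[a₊, S_A(s,t)] = −ε(s+t)·S_A(s−1,t)` for `s ≥ 1`, and
`[a₋, S_A(s,t)] = ε(s+t)·S_A(s,t−1)` for `t ≥ 1`. -/
theorem commutator_with_symmetrized_powers (ε : ℝ) (s t : ℕ) :
    (1 ≤ s → aP * SA ε s t - SA ε s t * aP
        = (-( (ε : ℂ) * ((s : ℂ) + (t : ℂ)))) • SA ε (s - 1) t) ∧
    (1 ≤ t → aM ε * SA ε s t - SA ε s t * aM ε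
        = ((ε : ℂ) * ((s : ℂ) + (t : ℂ))) • SA ε s (t - 1)) := by
  have SA_T : ∀ (s t : ℕ), SA ε s t = T ε (s+t) t := fun s t => rfl
  constructor
  · intro hs
    obtain ⟨s', rfl⟩ : ∃ s', s = s' + 1 := ⟨s - 1, by omega⟩
    rw [Nat.add_sub_cancel,
      show SA ε (s'+1) t = T ε (s'+t+1) t from by
        rw [SA_T, show s'+1+t = s'+t+1 from by omega],
      SA_T s' t, TA]
    congr 1
    push_cast
    ring
  · intro ht
    obtain ⟨t', rfl⟩ : ∃ t', t = t' + 1 := ⟨t - 1, by omega⟩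
    rw [Nat.add_sub_cancel,
      show SA ε s (t'+1) = T ε (s+t'+1) (t'+1) from by
        rw [SA_T, show s+(t'+1) = s+t'+1 from by omega],
      SA_T s t', TB]
    congr 1
    push_cast
    ring
end
end

section
/- Splitting identity for the symmetric basis: for all natural numbers s,t,u,v and every d with 0 ≤ d ≤ s+t+u+v, one has S(s,t,u,v) = Σ S(s−s′, t−t′, u−u′, v−v′) ∘ S(s′,t′,u′,v′), where the sum runs over all natural numbers s′ ≤ s, t′ ≤ t, u′ ≤ u, v′ ≤ v with s′+t′+u′+v′ = d. -/
open MvPolynomial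

noncomputable section

/-- Generalized `Sgen` with an arbitrary word length `m`. -/
def Tg (ε : ℝ) (m s t u v : ℕ) : E :=
  ∑ f ∈ (Finset.univ : Finset (Fin m → Fin 4)).filter
      (fun f =>
        (Finset.univ.filter fun i => f i = 0).card = s ∧
        (Finset.univ.filter fun i => f i = 1).card = t ∧
        (Finset.univ.filter fun i => f i = 2).card = u ∧
        (Finset.univ.filter fun i => f i = 3).card = v),
    (List.ofFn fun i : Fin m => ![aM ε, aP, bM ε, bP] (f i)).prod

lemma Sgen_eq_Tg (ε : ℝ) {m s t u v : ℕ} (h : s + t + u + v = m) :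
    Sgen ε s t u v = Tg ε m s t u v := by subst h; rfl

lemma Tg_eq_zero (ε : ℝ) {m s t u v : ℕ} (h : s + t + u + v ≠ m) :
    Tg ε m s t u v = 0 := by
  apply Finset.sum_eq_zero
  intro f hf
  simp only [Finset.mem_filter, Finset.mem_univ, true_and] at hf
  obtain ⟨h0, h1, h2, h3⟩ := hf
  exfalso
  have hc := Finset.card_eq_sum_card_fiberwise
    (f := f) (s := Finset.univ) (t := Finset.univ) (fun x _ => Finset.mem_univ _)
  rw [Finset.card_univ, Fintype.card_fin, Fin.sum_univ_four] at hc
  rw [h0, h1, h2, h3] at hc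
  omega

lemma count_append {m₁ m₂ : ℕ} (f₁ : Fin m₁ → Fin 4) (f₂ : Fin m₂ → Fin 4) (j : Fin 4) :
    (Finset.univ.filter fun i : Fin (m₁ + m₂) => Fin.append f₁ f₂ i = j).card =
      (Finset.univ.filter fun i => f₁ i = j).card +
        (Finset.univ.filter fun i => f₂ i = j).card := by
  rw [Finset.card_filter, Finset.card_filter, Finset.card_filter, Fin.sum_univ_add]
  simp

lemma prod_append {m₁ m₂ : ℕ} (M : Fin 4 → E) (f₁ : Fin m₁ → Fin 4) (f₂ : Fin m₂ → Fin 4) :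
    (List.ofFn fun i : Fin (m₁ + m₂) => M (Fin.append f₁ f₂ i)).prod =
      (List.ofFn fun i => M (f₁ i)).prod * (List.ofFn fun i => M (f₂ i)).prod := by
  have h : (fun i : Fin (m₁ + m₂) => M (Fin.append f₁ f₂ i)) =
      Fin.append (fun i => M (f₁ i)) (fun i => M (f₂ i)) := by
    funext i
    induction i using Fin.addCases with
    | left i => simp
    | right i => simp
  rw [h, List.ofFn_fin_append, List.prod_append]

lemma key_box_sum (s t u v a b c e a' b' c' e' : ℕ) (p q : E) :
    ∑ w ∈ (Finset.range (s + 1) ×ˢ Finset.range (t + 1) ×ˢ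
            Finset.range (u + 1) ×ˢ Finset.range (v + 1)),
      (if a = s - w.1 ∧ b = t - w.2.1 ∧ c = u - w.2.2.1 ∧ e = v - w.2.2.2 then p else 0) *
        (if a' = w.1 ∧ b' = w.2.1 ∧ c' = w.2.2.1 ∧ e' = w.2.2.2 then q else 0) =
      if a + a' = s ∧ b + b' = t ∧ c + c' = u ∧ e + e' = v then p * q else 0 := by
  by_cases h : a + a' = s ∧ b + b' = t ∧ c + c' = u ∧ e + e' = v
  · rw [if_pos h]
    rw [Finset.sum_eq_single_of_mem (a', b', c', e') (by
      simp only [Finset.mem_product, Finset.mem_range]; omega)]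
    · rw [if_pos (by omega : a = s - a' ∧ b = t - b' ∧ c = u - c' ∧ e = v - e'),
        if_pos ⟨rfl, rfl, rfl, rfl⟩]
    · intro w hw hne
      by_cases h2 : a' = w.1 ∧ b' = w.2.1 ∧ c' = w.2.2.1 ∧ e' = w.2.2.2
      · exact absurd (by simp [Prod.ext_iff]; omega) hne
      · rw [if_neg h2, mul_zero]
  · rw [if_neg h]
    apply Finset.sum_eq_zero
    intro w hw
    simp only [Finset.mem_product, Finset.mem_range] at hw
    by_cases h1 : a = s - w.1 ∧ b = t - w.2.1 ∧ c = u - w.2.2.1 ∧ e = v - w.2.2.2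
    · by_cases h2 : a' = w.1 ∧ b' = w.2.1 ∧ c' = w.2.2.1 ∧ e' = w.2.2.2
      · exact absurd (by omega) h
      · rw [if_neg h2, mul_zero]
    · rw [if_neg h1, zero_mul]

lemma Tg_add (ε : ℝ) (m₁ m₂ s t u v : ℕ) :
    Tg ε (m₁ + m₂) s t u v =
      ∑ w ∈ (Finset.range (s + 1) ×ˢ Finset.range (t + 1) ×ˢ
              Finset.range (u + 1) ×ˢ Finset.range (v + 1)),
        Tg ε m₁ (s - w.1) (t - w.2.1) (u - w.2.2.1) (v - w.2.2.2) *
          Tg ε m₂ w.1 w.2.1 w.2.2.1 w.2.2.2 := by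
  unfold Tg
  simp only [Finset.sum_filter]
  -- rewrite products of sums on the RHS
  simp_rw [Finset.sum_mul_sum]
  rw [Finset.sum_comm]
  refine Eq.trans ?_ (Finset.sum_congr rfl fun f₁ _ => Finset.sum_comm)
  -- reindex the LHS via Fin.appendEquiv
  have hre := Fintype.sum_equiv (Fin.appendEquiv (α := Fin 4) m₁ m₂)
    (fun p : (Fin m₁ → Fin 4) × (Fin m₂ → Fin 4) =>
      if ((Finset.univ.filter fun i => p.1 i = 0).card +
            (Finset.univ.filter fun i => p.2 i = 0).card = s ∧
          (Finset.univ.filter fun i => p.1 i = 1).card +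
            (Finset.univ.filter fun i => p.2 i = 1).card = t ∧
          (Finset.univ.filter fun i => p.1 i = 2).card +
            (Finset.univ.filter fun i => p.2 i = 2).card = u ∧
          (Finset.univ.filter fun i => p.1 i = 3).card +
            (Finset.univ.filter fun i => p.2 i = 3).card = v) then
        (List.ofFn fun i => ![aM ε, aP, bM ε, bP] (p.1 i)).prod *
          (List.ofFn fun i => ![aM ε, aP, bM ε, bP] (p.2 i)).prod
      else 0)
    (fun f : Fin (m₁ + m₂) → Fin 4 =>
      if ((Finset.univ.filter fun i => f i = 0).card = s ∧
          (Finset.univ.filter fun i => f i = 1).card = t ∧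
          (Finset.univ.filter fun i => f i = 2).card = u ∧
          (Finset.univ.filter fun i => f i = 3).card = v) then
        (List.ofFn fun i : Fin (m₁ + m₂) => ![aM ε, aP, bM ε, bP] (f i)).prod
      else 0)
    (fun p => by
      simp only [Fin.appendEquiv_apply, count_append, prod_append])
  rw [← hre, Fintype.sum_prod_type]
  refine Finset.sum_congr rfl fun f₁ _ => Finset.sum_congr rfl fun f₂ _ => ?_
  exact (key_box_sum s t u v _ _ _ _ _ _ _ _ _ _).symm

/-- Splitting identity for the symmetric basis: for every `d ≤ s+t+u+v`,
`S(s,t,u,v) = Σ S(s−s′,t−t′,u−u′,v−v′) ∘ S(s′,t′,u′,v′)`, the sum being over all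
`s′ ≤ s`, `t′ ≤ t`, `u′ ≤ u`, `v′ ≤ v` with `s′+t′+u′+v′ = d`. -/
theorem symmetric_basis_splitting (ε : ℝ) (s t u v d : ℕ) (hd : d ≤ s + t + u + v) :
    Sgen ε s t u v =
      ∑ w ∈ (Finset.range (s + 1) ×ˢ Finset.range (t + 1) ×ˢ
              Finset.range (u + 1) ×ˢ Finset.range (v + 1)).filter
          (fun w => w.1 + w.2.1 + w.2.2.1 + w.2.2.2 = d),
        Sgen ε (s - w.1) (t - w.2.1) (u - w.2.2.1) (v - w.2.2.2) *
          Sgen ε w.1 w.2.1 w.2.2.1 w.2.2.2 := by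
  have h : s + t + u + v = (s + t + u + v - d) + d := (Nat.sub_add_cancel hd).symm
  calc Sgen ε s t u v = Tg ε ((s + t + u + v - d) + d) s t u v := Sgen_eq_Tg ε h
    _ = ∑ w ∈ (Finset.range (s + 1) ×ˢ Finset.range (t + 1) ×ˢ
              Finset.range (u + 1) ×ˢ Finset.range (v + 1)),
        Tg ε (s + t + u + v - d) (s - w.1) (t - w.2.1) (u - w.2.2.1) (v - w.2.2.2) *
          Tg ε d w.1 w.2.1 w.2.2.1 w.2.2.2 := Tg_add ε _ d s t u v
    _ = ∑ w ∈ ((Finset.range (s + 1) ×ˢ Finset.range (t + 1) ×ˢ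
              Finset.range (u + 1) ×ˢ Finset.range (v + 1)).filter
          (fun w => w.1 + w.2.1 + w.2.2.1 + w.2.2.2 = d)),
        Tg ε (s + t + u + v - d) (s - w.1) (t - w.2.1) (u - w.2.2.1) (v - w.2.2.2) *
          Tg ε d w.1 w.2.1 w.2.2.1 w.2.2.2 := by
      refine (Finset.sum_filter_of_ne fun w hw hne => ?_).symm
      by_contra hss
      exact hne (by rw [Tg_eq_zero ε hss, mul_zero])
    _ = _ := by
      refine Finset.sum_congr rfl fun w hw => ?_
      simp only [Finset.mem_filter, Finset.mem_product, Finset.mem_range] at hw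
      obtain ⟨⟨h1, h2, h3, h4⟩, hsum⟩ := hw
      rw [Sgen_eq_Tg ε (by omega : (s - w.1) + (t - w.2.1) + (u - w.2.2.1) + (v - w.2.2.2) = s + t + u + v - d),
        Sgen_eq_Tg ε hsum]
end
end

section
/- Factorization of the symmetric basis: for all natural numbers s,t,u,v, one has (s+t)!·(u+v)!·S(s,t,u,v) = (s+t+u+v)!·S_A(s,t)·S_B(u,v) in E. -/
open MvPolynomial

noncomputable section

namespace SymFactAux

open Finset

/-! ### Commutation lemmas -/

lemma pderiv_comm' (i j : Fin 2) (p : P2) :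
    pderiv i (pderiv j p) = pderiv j (pderiv i p) := by
  induction p using MvPolynomial.induction_on with
  | C a => simp [pderiv_C]
  | add p q hp hq => simp [hp, hq]
  | mul_X p k hp =>
    simp only [pderiv_mul, map_add, hp]
    rcases eq_or_ne k i with rfl | hki <;> rcases eq_or_ne k j with rfl | hkj <;>
      simp [pderiv_X_self, pderiv_X_of_ne, pderiv_one, *]

lemma commute_cross (ε : ℝ) (c d : Fin 4) (hc : c = 0 ∨ c = 1) (hd : d = 2 ∨ d = 3) :
    Commute (![aM ε, aP, bM ε, bP] c) (![aM ε, aP, bM ε, bP] d) := by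
  have hDD : Commute ((pderiv (0 : Fin 2)).toLinearMap : E)
      ((pderiv (1 : Fin 2)).toLinearMap : E) :=
    LinearMap.ext fun p => by simpa [Module.End.mul_apply] using pderiv_comm' 0 1 p
  have hXD : Commute aP ((pderiv (1 : Fin 2)).toLinearMap : E) :=
    LinearMap.ext fun p => by
      simp [aP, Module.End.mul_apply, pderiv_mul, pderiv_X_of_ne (show (0:Fin 2) ≠ 1 by decide)]
  have hYD : Commute bP ((pderiv (0 : Fin 2)).toLinearMap : E) :=
    LinearMap.ext fun p => by
      simp [bP, Module.End.mul_apply, pderiv_mul, pderiv_X_of_ne (show (1:Fin 2) ≠ 0 by decide)]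
  have hXY : Commute aP bP :=
    LinearMap.ext fun p => by
      simp [aP, bP, Module.End.mul_apply]; ring
  rcases hc with rfl | rfl <;> rcases hd with rfl | rfl <;>
    simp only [Matrix.cons_val_zero, Matrix.cons_val_one, Matrix.head_cons, aM, bM,
      Matrix.cons_val_two, Matrix.cons_val_three, Matrix.tail_cons]
  · exact (hDD.smul_left ((ε:ℂ))).smul_right ((ε:ℂ))
  · exact (hYD.symm).smul_left ((ε:ℂ))
  · exact hXD.smul_right ((ε:ℂ))
  · exact hXY

/-! ### List lemmas -/

lemma prod_map_filter_mul {α M : Type*} [Monoid M] (p : α → Prop) [DecidablePred p]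
    (f : α → M) (l : List α)
    (h : ∀ a ∈ l, ∀ b ∈ l, p a → ¬ p b → Commute (f a) (f b)) :
    (l.map f).prod =
      ((l.filter (fun a => decide (p a))).map f).prod *
      ((l.filter (fun a => decide (¬ p a))).map f).prod := by
  induction l with
  | nil => simp
  | cons x l ih =>
    have h' : ∀ a ∈ l, ∀ b ∈ l, p a → ¬ p b → Commute (f a) (f b) := fun a ha b hb =>
      h a (List.mem_cons_of_mem _ ha) b (List.mem_cons_of_mem _ hb)
    by_cases hx : p x
    · simp [List.filter_cons, hx, ih h', mul_assoc]
    · have hc : Commute (f x) (((l.filter fun a => decide (p a)).map f).prod) := by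
        apply Commute.list_prod_right
        intro y hy
        obtain ⟨a, ha, rfl⟩ := List.mem_map.1 hy
        have hpa : p a := by simpa using (List.mem_filter.1 ha).2
        exact (h a (List.mem_cons_of_mem _ (List.mem_filter.1 ha).1) x
          List.mem_cons_self hpa hx).symm
      simp only [List.filter_cons, hx, decide_not, List.map_cons, List.prod_cons,
        if_pos, if_neg, ih h']
      simp [hx]
      rw [← mul_assoc, hc.eq, mul_assoc]

lemma filter_finRange_eq {n m : ℕ} (T : Finset (Fin n)) (hT : T.card = m) :
    (List.finRange n).filter (fun i => decide (i ∈ T)) = List.ofFn (T.orderEmbOfFin hT) := by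
  have hs1 : List.Pairwise (· < ·) ((List.finRange n).filter (fun i => decide (i ∈ T))) :=
    (List.pairwise_lt_finRange n).filter _
  have hs2 : List.Pairwise (· < ·) (List.ofFn (T.orderEmbOfFin hT)) :=
    (List.sortedLT_ofFn_iff.2 (T.orderEmbOfFin hT).strictMono).pairwise
  haveI : IsAntisymm (Fin n) (· < ·) := ⟨fun a b h1 h2 => absurd h2 (lt_asymm h1)⟩
  refine List.Perm.eq_of_pairwise (fun a b _ _ h1 h2 => absurd h2 (lt_asymm h1)) hs1 hs2 ?_
  rw [List.perm_ext_iff_of_nodup ((List.nodup_finRange n).filter _)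
    (List.nodup_ofFn.2 (T.orderEmbOfFin hT).injective)]
  intro a
  simp [List.mem_filter, List.mem_ofFn]
  rw [← Finset.mem_coe, ← T.range_orderEmbOfFin hT]
  exact Iff.rfl

/-! ### The interleaving map -/

variable {n m k : ℕ}

def mk (T : Finset (Fin n)) (hT : T.card = m) (hK : Tᶜ.card = k)
    (A : Finset (Fin m)) (B : Finset (Fin k)) : Fin n → Fin 4 :=
  fun i =>
    if h : i ∈ T then (if (T.orderIsoOfFin hT).symm ⟨i, h⟩ ∈ A then 1 else 0)
    else (if (Tᶜ.orderIsoOfFin hK).symm ⟨i, Finset.mem_compl.2 h⟩ ∈ B then 3 else 2)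

lemma mk_emb (T : Finset (Fin n)) (hT : T.card = m) (hK : Tᶜ.card = k)
    (A : Finset (Fin m)) (B : Finset (Fin k)) (j : Fin m) :
    mk T hT hK A B (T.orderEmbOfFin hT j) = if j ∈ A then 1 else 0 := by
  have h : T.orderEmbOfFin hT j ∈ T := T.orderEmbOfFin_mem hT j
  rw [mk, dif_pos h]
  have : (⟨T.orderEmbOfFin hT j, h⟩ : {x // x ∈ T}) = T.orderIsoOfFin hT j :=
    Subtype.ext rfl
  rw [this, OrderIso.symm_apply_apply]

lemma mk_embc (T : Finset (Fin n)) (hT : T.card = m) (hK : Tᶜ.card = k)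
    (A : Finset (Fin m)) (B : Finset (Fin k)) (j : Fin k) :
    mk T hT hK A B (Tᶜ.orderEmbOfFin hK j) = if j ∈ B then 3 else 2 := by
  have h : Tᶜ.orderEmbOfFin hK j ∈ Tᶜ := Tᶜ.orderEmbOfFin_mem hK j
  have h' : ¬ (Tᶜ.orderEmbOfFin hK j ∈ T) := Finset.mem_compl.1 h
  rw [mk, dif_neg h']
  have : (⟨Tᶜ.orderEmbOfFin hK j, Finset.mem_compl.2 h'⟩ : {x // x ∈ Tᶜ}) =
      Tᶜ.orderIsoOfFin hK j := Subtype.ext rfl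
  rw [this, OrderIso.symm_apply_apply]

lemma mk_mem_iff (T : Finset (Fin n)) (hT : T.card = m) (hK : Tᶜ.card = k)
    (A : Finset (Fin m)) (B : Finset (Fin k)) (i : Fin n) :
    (mk T hT hK A B i = 0 ∨ mk T hT hK A B i = 1) ↔ i ∈ T := by
  rw [mk]
  by_cases h : i ∈ T
  · rw [dif_pos h]; split_ifs <;> simp [h]
  · rw [dif_neg h]; split_ifs <;> simp [h]

lemma mk_not_mem_iff (T : Finset (Fin n)) (hT : T.card = m) (hK : Tᶜ.card = k)
    (A : Finset (Fin m)) (B : Finset (Fin k)) (i : Fin n) :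
    (mk T hT hK A B i = 2 ∨ mk T hT hK A B i = 3) ↔ i ∉ T := by
  rw [mk]
  by_cases h : i ∈ T
  · rw [dif_pos h]; split_ifs <;> simp [h]
  · rw [dif_neg h]; split_ifs <;> simp [h]

lemma exists_emb (T : Finset (Fin n)) (hT : T.card = m) {i : Fin n} (h : i ∈ T) :
    ∃ j, T.orderEmbOfFin hT j = i := by
  refine ⟨(T.orderIsoOfFin hT).symm ⟨i, h⟩, ?_⟩
  show ((T.orderIsoOfFin hT) ((T.orderIsoOfFin hT).symm ⟨i, h⟩) : Fin n) = i
  rw [OrderIso.apply_symm_apply]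

lemma mk_fiber_one (T : Finset (Fin n)) (hT : T.card = m) (hK : Tᶜ.card = k)
    (A : Finset (Fin m)) (B : Finset (Fin k)) :
    univ.filter (fun i => mk T hT hK A B i = 1) = A.map (T.orderEmbOfFin hT).toEmbedding := by
  ext i
  simp only [Finset.mem_filter, Finset.mem_univ, true_and, Finset.mem_map,
    RelEmbedding.coe_toEmbedding]
  constructor
  · intro h1
    obtain ⟨j, rfl⟩ := exists_emb T hT ((mk_mem_iff T hT hK A B i).1 (Or.inr h1))
    rw [mk_emb] at h1
    refine ⟨j, ?_, rfl⟩
    by_contra hj; rw [if_neg hj] at h1; exact absurd h1 (by decide)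
  · rintro ⟨j, hj, rfl⟩
    rw [mk_emb]; simp [hj]

lemma mk_fiber_zero (T : Finset (Fin n)) (hT : T.card = m) (hK : Tᶜ.card = k)
    (A : Finset (Fin m)) (B : Finset (Fin k)) :
    univ.filter (fun i => mk T hT hK A B i = 0) = Aᶜ.map (T.orderEmbOfFin hT).toEmbedding := by
  ext i
  simp only [Finset.mem_filter, Finset.mem_univ, true_and, Finset.mem_map,
    RelEmbedding.coe_toEmbedding, Finset.mem_compl]
  constructor
  · intro h1
    obtain ⟨j, rfl⟩ := exists_emb T hT ((mk_mem_iff T hT hK A B i).1 (Or.inl h1))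
    rw [mk_emb] at h1
    refine ⟨j, ?_, rfl⟩
    intro hj; rw [if_pos hj] at h1; exact absurd h1 (by decide)
  · rintro ⟨j, hj, rfl⟩
    rw [mk_emb]; simp [hj]

lemma mk_fiber_three (T : Finset (Fin n)) (hT : T.card = m) (hK : Tᶜ.card = k)
    (A : Finset (Fin m)) (B : Finset (Fin k)) :
    univ.filter (fun i => mk T hT hK A B i = 3) = B.map (Tᶜ.orderEmbOfFin hK).toEmbedding := by
  ext i
  simp only [Finset.mem_filter, Finset.mem_univ, true_and, Finset.mem_map,
    RelEmbedding.coe_toEmbedding]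
  constructor
  · intro h1
    have hi : i ∉ T := (mk_not_mem_iff T hT hK A B i).1 (Or.inr h1)
    obtain ⟨j, rfl⟩ := exists_emb Tᶜ hK (Finset.mem_compl.2 hi)
    rw [mk_embc] at h1
    refine ⟨j, ?_, rfl⟩
    by_contra hj; rw [if_neg hj] at h1; exact absurd h1 (by decide)
  · rintro ⟨j, hj, rfl⟩
    rw [mk_embc]; simp [hj]

lemma mk_fiber_two (T : Finset (Fin n)) (hT : T.card = m) (hK : Tᶜ.card = k)
    (A : Finset (Fin m)) (B : Finset (Fin k)) :
    univ.filter (fun i => mk T hT hK A B i = 2) = Bᶜ.map (Tᶜ.orderEmbOfFin hK).toEmbedding := by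
  ext i
  simp only [Finset.mem_filter, Finset.mem_univ, true_and, Finset.mem_map,
    RelEmbedding.coe_toEmbedding, Finset.mem_compl]
  constructor
  · intro h1
    have hi : i ∉ T := (mk_not_mem_iff T hT hK A B i).1 (Or.inl h1)
    obtain ⟨j, rfl⟩ := exists_emb Tᶜ hK (Finset.mem_compl.2 hi)
    rw [mk_embc] at h1
    refine ⟨j, ?_, rfl⟩
    intro hj; rw [if_pos hj] at h1; exact absurd h1 (by decide)
  · rintro ⟨j, hj, rfl⟩
    rw [mk_embc]; simp [hj]

/-! ### The product of a word built by `mk` factorizes -/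

lemma W_mk (ε : ℝ) (T : Finset (Fin n)) (hT : T.card = m) (hK : Tᶜ.card = k)
    (A : Finset (Fin m)) (B : Finset (Fin k)) :
    (List.ofFn fun i : Fin n => ![aM ε, aP, bM ε, bP] (mk T hT hK A B i)).prod =
      (List.ofFn fun j : Fin m => if j ∈ A then aP else aM ε).prod *
      (List.ofFn fun j : Fin k => if j ∈ B then bP else bM ε).prod := by
  rw [List.ofFn_eq_map]
  rw [prod_map_filter_mul (fun i => i ∈ T)
    (fun i => ![aM ε, aP, bM ε, bP] (mk T hT hK A B i)) (List.finRange n)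
    (by
      intro a _ b _ ha hb
      exact commute_cross ε _ _ ((mk_mem_iff T hT hK A B a).2 ha)
        ((mk_not_mem_iff T hT hK A B b).2 hb))]
  congr 1
  · rw [filter_finRange_eq T hT, List.map_ofFn]
    have : ((fun i => ![aM ε, aP, bM ε, bP] (mk T hT hK A B i)) ∘ ⇑(T.orderEmbOfFin hT)) =
        fun j => if j ∈ A then aP else aM ε := by
      funext j
      simp only [Function.comp_apply, mk_emb]
      by_cases hj : j ∈ A <;> simp [hj]
    rw [this]
  · have hcongr : ((List.finRange n).filter (fun i => decide (¬ i ∈ T))) =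
        ((List.finRange n).filter (fun i => decide (i ∈ Tᶜ))) := by
      apply List.filter_congr
      intro i _
      simp
    rw [hcongr, filter_finRange_eq Tᶜ hK, List.map_ofFn]
    have : ((fun i => ![aM ε, aP, bM ε, bP] (mk T hT hK A B i)) ∘ ⇑(Tᶜ.orderEmbOfFin hK)) =
        fun j => if j ∈ B then bP else bM ε := by
      funext j
      simp only [Function.comp_apply, mk_embc]
      by_cases hj : j ∈ B <;> simp [hj]
    rw [this]

end SymFactAux

open SymFactAux Finset

/-- The inner sum over all interleavings with a fixed set `T` of `a`-positions. -/
lemma interleave_sum (ε : ℝ) (s t u v : ℕ) (T : Finset (Fin (s + t + u + v)))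
    (hT : T.card = s + t) (hK : Tᶜ.card = u + v) :
    ∑ f ∈ ((Finset.univ : Finset (Fin (s + t + u + v) → Fin 4)).filter
      (fun f =>
        (Finset.univ.filter fun i => f i = 0).card = s ∧
        (Finset.univ.filter fun i => f i = 1).card = t ∧
        (Finset.univ.filter fun i => f i = 2).card = u ∧
        (Finset.univ.filter fun i => f i = 3).card = v)).filter
      (fun f => Finset.univ.filter (fun i => f i = 0 ∨ f i = 1) = T),
      (List.ofFn fun i : Fin (s + t + u + v) => ![aM ε, aP, bM ε, bP] (f i)).prod =
      SA ε s t * SB ε u v := by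
  classical
  rw [SA, SB, Finset.sum_mul_sum, ← Finset.sum_product']
  symm
  refine Finset.sum_bij' (fun x _ => mk T hT hK x.1 x.2)
    (fun f _ => (Finset.univ.filter (fun j => f (T.orderEmbOfFin hT j) = 1),
                 Finset.univ.filter (fun j => f (Tᶜ.orderEmbOfFin hK j) = 3)))
    ?_ ?_ ?_ ?_ ?_
  · -- mk lands in the f-set
    rintro ⟨A, B⟩ hx
    rw [Finset.mem_product] at hx
    obtain ⟨hx1, hx2⟩ := hx
    rw [Finset.mem_powersetCard] at hx1 hx2
    have hA := hx1.2
    have hB := hx2.2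
    have hAc : (Aᶜ : Finset (Fin (s + t))).card = s := by
      rw [Finset.card_compl, hA]; simp
    have hBc : (Bᶜ : Finset (Fin (u + v))).card = u := by
      rw [Finset.card_compl, hB]; simp
    refine Finset.mem_filter.2 ⟨Finset.mem_filter.2 ⟨Finset.mem_univ _, ?_, ?_, ?_, ?_⟩, ?_⟩
    · rw [mk_fiber_zero, Finset.card_map, hAc]
    · rw [mk_fiber_one, Finset.card_map, hA]
    · rw [mk_fiber_two, Finset.card_map, hBc]
    · rw [mk_fiber_three, Finset.card_map, hB]
    · ext i
      simp only [Finset.mem_filter, Finset.mem_univ, true_and]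
      exact mk_mem_iff T hT hK A B i
  · -- the extracted pair lands in the pair set
    intro f hf
    rw [Finset.mem_filter] at hf
    obtain ⟨hf1, hfT⟩ := hf
    rw [Finset.mem_filter] at hf1
    obtain ⟨-, h0, h1, h2, h3⟩ := hf1
    rw [Finset.mem_product, Finset.mem_powersetCard, Finset.mem_powersetCard]
    have memT : ∀ i, i ∈ T ↔ (f i = 0 ∨ f i = 1) := by
      intro i
      rw [← hfT]
      simp
    have hmapA : (Finset.univ.filter (fun j => f (T.orderEmbOfFin hT j) = 1)).map
        (T.orderEmbOfFin hT).toEmbedding = Finset.univ.filter (fun i => f i = 1) := by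
      ext i
      simp only [Finset.mem_map, Finset.mem_filter, Finset.mem_univ, true_and,
        RelEmbedding.coe_toEmbedding]
      constructor
      · rintro ⟨j, hj, rfl⟩; exact hj
      · intro hi
        obtain ⟨j, rfl⟩ := exists_emb T hT ((memT i).2 (Or.inr hi))
        exact ⟨j, hi, rfl⟩
    have hmapB : (Finset.univ.filter (fun j => f (Tᶜ.orderEmbOfFin hK j) = 3)).map
        (Tᶜ.orderEmbOfFin hK).toEmbedding = Finset.univ.filter (fun i => f i = 3) := by
      ext i
      simp only [Finset.mem_map, Finset.mem_filter, Finset.mem_univ, true_and,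
        RelEmbedding.coe_toEmbedding]
      constructor
      · rintro ⟨j, hj, rfl⟩; exact hj
      · intro hi
        have hiT : i ∉ T := by
          intro hmem
          rcases (memT i).1 hmem with h | h <;> rw [hi] at h <;> exact absurd h (by decide)
        obtain ⟨j, rfl⟩ := exists_emb Tᶜ hK (Finset.mem_compl.2 hiT)
        exact ⟨j, hi, rfl⟩
    constructor
    · refine ⟨Finset.subset_univ _, ?_⟩
      have := congrArg Finset.card hmapA
      rw [Finset.card_map, h1] at this
      exact this
    · refine ⟨Finset.subset_univ _, ?_⟩
      have := congrArg Finset.card hmapB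
      rw [Finset.card_map, h3] at this
      exact this
  · -- left inverse : extracting the pair from mk gives back (A, B)
    rintro ⟨A, B⟩ hx
    dsimp only
    refine Prod.ext ?_ ?_
    · ext j
      simp only [Finset.mem_filter, Finset.mem_univ, true_and, mk_emb]
      by_cases hj : j ∈ A <;> simp [hj]
    · ext j
      simp only [Finset.mem_filter, Finset.mem_univ, true_and, mk_embc]
      by_cases hj : j ∈ B <;> simp [hj]
  · -- right inverse : mk of the extracted pair gives back f
    intro f hf
    dsimp only
    rw [Finset.mem_filter] at hf
    obtain ⟨hf1, hfT⟩ := hf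
    have memT : ∀ i, i ∈ T ↔ (f i = 0 ∨ f i = 1) := by
      intro i
      rw [← hfT]
      simp
    funext i
    by_cases h : i ∈ T
    · obtain ⟨j, rfl⟩ := exists_emb T hT h
      rw [mk_emb]
      rcases (memT _).1 h with h0 | h1
      · rw [if_neg (by
          simp only [Finset.mem_filter, Finset.mem_univ, true_and, h0]
          decide), h0]
      · rw [if_pos (by
          simp only [Finset.mem_filter, Finset.mem_univ, true_and]
          exact h1), h1]
    · have h23 : f i = 2 ∨ f i = 3 := by
        have hni := h
        rw [memT] at hni
        revert hni
        generalize f i = c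
        revert c
        decide
      obtain ⟨j, rfl⟩ := exists_emb Tᶜ hK (Finset.mem_compl.2 h)
      rw [mk_embc]
      rcases h23 with h2 | h3
      · rw [if_neg (by
          simp only [Finset.mem_filter, Finset.mem_univ, true_and, h2]
          decide), h2]
      · rw [if_pos (by
          simp only [Finset.mem_filter, Finset.mem_univ, true_and]
          exact h3), h3]
  · -- values agree
    rintro ⟨A, B⟩ hx
    exact (W_mk ε T hT hK A B).symm

/-- Factorization of the symmetric basis:
`(s+t)!·(u+v)!·S(s,t,u,v) = (s+t+u+v)!·S_A(s,t)·S_B(u,v)`. -/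
theorem symmetric_basis_factorization (ε : ℝ) (s t u v : ℕ) :
    (((s + t).factorial * (u + v).factorial : ℕ) : ℂ) • Sgen ε s t u v =
      (((s + t + u + v).factorial : ℕ) : ℂ) • (SA ε s t * SB ε u v) := by
  classical
  have hmaps : ∀ f ∈ (Finset.univ : Finset (Fin (s + t + u + v) → Fin 4)).filter
      (fun f =>
        (Finset.univ.filter fun i => f i = 0).card = s ∧
        (Finset.univ.filter fun i => f i = 1).card = t ∧
        (Finset.univ.filter fun i => f i = 2).card = u ∧
        (Finset.univ.filter fun i => f i = 3).card = v),
      Finset.univ.filter (fun i => f i = 0 ∨ f i = 1) ∈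
        Finset.powersetCard (s + t) (Finset.univ : Finset (Fin (s + t + u + v))) := by
    intro f hf
    rw [Finset.mem_filter] at hf
    obtain ⟨-, h0, h1, -, -⟩ := hf
    rw [Finset.mem_powersetCard]
    refine ⟨Finset.subset_univ _, ?_⟩
    rw [Finset.filter_or, Finset.card_union_of_disjoint, h0, h1]
    rw [Finset.disjoint_left]
    intro a ha hb
    rw [Finset.mem_filter] at ha hb
    rw [ha.2] at hb
    exact absurd hb.2 (by decide)
  have step1 : Sgen ε s t u v =
      ∑ _T ∈ Finset.powersetCard (s + t) (Finset.univ : Finset (Fin (s + t + u + v))),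
        (SA ε s t * SB ε u v) := by
    rw [Sgen, ← Finset.sum_fiberwise_of_maps_to hmaps]
    refine Finset.sum_congr rfl ?_
    intro T hTm
    rw [Finset.mem_powersetCard] at hTm
    have hT : T.card = s + t := hTm.2
    have hK : Tᶜ.card = u + v := by
      rw [Finset.card_compl, hT]
      simp
      omega
    exact interleave_sum ε s t u v T hT hK
  rw [step1, Finset.sum_const, Finset.card_powersetCard, Finset.card_univ, Fintype.card_fin]
  rw [← Nat.cast_smul_eq_nsmul ℂ, smul_smul, ← Nat.cast_mul]
  congr 1
  norm_cast
  have h := Nat.choose_mul_factorial_mul_factorial (show s + t ≤ s + t + u + v by omega)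
  have h2 : s + t + u + v - (s + t) = u + v := by omega
  rw [h2] at h
  rw [← h]
  ring
end
end

section
/- Structure of joint eigenvectors of ad K₀ and ad J₀ (Lemma 2.2 of the paper): assume ε ≠ 0, let A ⊆ E be the unital ℂ-subalgebra generated by a₊, a₋, b₊, b₋, and let w ∈ A and integers c, e satisfy 2·[K₀,w] = ε·(c+e)·w and 2·[J₀,w] = ε·(c−e)·w. Then there exists a polynomial P ∈ ℂ[X,Y] in two commuting variables such that w = A_c ∘ B_e ∘ P(J₀,K₀), where A_c = a₊^c if c ≥ 0 and A_c = a₋^(−c) if c < 0, B_e = b₊^e if e ≥ 0 and B_e = b₋^(−e) if e < 0, and P(J₀,K₀) denotes the evaluation of P at the commuting operators J₀ and K₀. (In the paper's notation c = r+m and e = r−m.) -/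
open MvPolynomial

noncomputable section

/-- `A_c = a₊^c` if `c ≥ 0` and `a₋^(−c)` if `c < 0`. -/
def Apow (ε : ℝ) (c : ℤ) : E := if 0 ≤ c then aP ^ c.toNat else aM ε ^ (-c).toNat

/-- `B_e = b₊^e` if `e ≥ 0` and `b₋^(−e)` if `e < 0`. -/
def Bpow (ε : ℝ) (e : ℤ) : E := if 0 ≤ e then bP ^ e.toNat else bM ε ^ (-e).toNat

/-- Evaluation of a polynomial `P ∈ ℂ[X,Y]` in two commuting variables at the
commuting operators `J₀` (for `X`) and `K₀` (for `Y`). -/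
def evalJK (ε : ℝ) (P : MvPolynomial (Fin 2) ℂ) : E :=
  ∑ d ∈ P.support, P.coeff d • (J0 ε ^ d 0 * K0 ε ^ d 1)

/- AUX SECTION -/
section Aux
variable {ε : ℝ}

lemma haa (ε : ℝ) : aM ε * aP = aP * aM ε + (ε : ℂ) • (1 : E) := by
  apply LinearMap.ext; intro p
  simp [aM, aP, Module.End.mul_apply, pderiv_mul]

lemma hbb (ε : ℝ) : bM ε * bP = bP * bM ε + (ε : ℂ) • (1 : E) := by
  apply LinearMap.ext; intro p
  simp [bM, bP, Module.End.mul_apply, pderiv_mul]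

lemma capbp : Commute aP bP := by
  apply LinearMap.ext; intro p
  simp [aP, bP, Module.End.mul_apply]
  ring

lemma capbm (ε : ℝ) : Commute aP (bM ε) := by
  apply LinearMap.ext; intro p
  simp [aP, bM, Module.End.mul_apply, pderiv_mul]

lemma cambp (ε : ℝ) : Commute (aM ε) bP := by
  apply LinearMap.ext; intro p
  simp [aM, bP, Module.End.mul_apply, pderiv_mul]

lemma pd_comm (i j : Fin 2) (p : P2) : pderiv i (pderiv j p) = pderiv j (pderiv i p) := by
  induction p using MvPolynomial.induction_on with
  | C => simp
  | add p q hp hq => simp [hp, hq]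
  | mul_X p k hp =>
      simp only [pderiv_mul, map_add, pderiv_X, hp, Pi.single_apply]
      split_ifs <;> simp <;> ring

lemma cambm (ε : ℝ) : Commute (aM ε) (bM ε) := by
  apply LinearMap.ext; intro p
  simp [aM, bM, Module.End.mul_apply]
  exact congrArg _ (congrArg _ (pd_comm _ _ _))

/-- number operators -/
def Na (ε : ℝ) : E := aP * aM ε
def Nb (ε : ℝ) : E := bP * bM ε

lemma cNaNb : Commute (Na ε) (Nb ε) :=
  ((capbp.mul_right (capbm ε)).mul_left ((cambp ε).mul_right (cambm ε)))

/-- eigen-relation: `[u, v] = α • v`. -/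
def Eig (u : E) (α : ℂ) (v : E) : Prop := u * v = v * u + α • v

lemma Eig.cast {u v : E} {α β : ℂ} (h : Eig u α v) (e : α = β) : Eig u β v := e ▸ h

lemma Eig.of_commute {u v : E} (h : Commute u v) : Eig u 0 v := by
  simp [Eig, h.eq]

lemma Eig.mul {u v w : E} {α β : ℂ} (hv : Eig u α v) (hw : Eig u β w) :
    Eig u (α + β) (v * w) := by
  unfold Eig at *
  rw [← mul_assoc, hv, add_mul, mul_assoc, hw, smul_mul_assoc]
  rw [mul_add, mul_smul_comm, ← mul_assoc, add_smul]
  abel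

lemma Eig.pow {u v : E} {α : ℂ} (hv : Eig u α v) (n : ℕ) :
    Eig u ((n : ℂ) * α) (v ^ n) := by
  induction n with
  | zero => simpa using Eig.of_commute (Commute.one_right u)
  | succ n ih =>
      have := ih.mul hv
      rw [← pow_succ] at this
      exact this.cast (by push_cast; ring)

lemma Eig.addu {u u' v : E} {α α' : ℂ} (h : Eig u α v) (h' : Eig u' α' v) :
    Eig (u + u') (α + α') v := by
  unfold Eig at *
  rw [add_mul, mul_add, h, h', add_smul]
  abel

lemma Eig.subu {u u' v : E} {α α' : ℂ} (h : Eig u α v) (h' : Eig u' α' v) :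
    Eig (u - u') (α - α') v := by
  unfold Eig at *
  rw [sub_mul, mul_sub, h, h']
  module

lemma Eig.smulu {u v : E} {α : ℂ} (h : Eig u α v) (z : ℂ) :
    Eig (z • u) (z * α) v := by
  unfold Eig at *
  rw [smul_mul_assoc, h, mul_smul_comm, smul_add, smul_smul]

lemma Eig.addv {u v w : E} {α : ℂ} (h : Eig u α v) (h' : Eig u α w) :
    Eig u α (v + w) := by
  unfold Eig at *
  rw [mul_add, h, h', add_mul, smul_add]
  abel

lemma Eig.smulv {u v : E} {α : ℂ} (h : Eig u α v) (z : ℂ) :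
    Eig u α (z • v) := by
  unfold Eig at *
  rw [mul_smul_comm, h, smul_add, smul_mul_assoc, smul_comm]

lemma Eig.zerov (u : E) (α : ℂ) : Eig u α 0 := by simp [Eig]

lemma eig_Na_aP : Eig (Na ε) (ε : ℂ) aP := by
  unfold Eig Na
  rw [mul_assoc, haa, mul_add, ← mul_assoc, mul_smul_comm, mul_one]

lemma eig_Na_aM : Eig (Na ε) (-(ε : ℂ)) (aM ε) := by
  unfold Eig Na
  rw [← mul_assoc, haa, add_mul, smul_mul_assoc, one_mul]
  module

lemma eig_Nb_bP : Eig (Nb ε) (ε : ℂ) bP := by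
  unfold Eig Nb
  rw [mul_assoc, hbb, mul_add, ← mul_assoc, mul_smul_comm, mul_one]

lemma eig_Nb_bM : Eig (Nb ε) (-(ε : ℂ)) (bM ε) := by
  unfold Eig Nb
  rw [← mul_assoc, hbb, add_mul, smul_mul_assoc, one_mul]
  module

lemma eig_Na_bP : Eig (Na ε) 0 bP :=
  Eig.of_commute (capbp.mul_left (cambp ε))
lemma eig_Na_bM : Eig (Na ε) 0 (bM ε) :=
  Eig.of_commute ((capbm ε).mul_left (cambm ε))
lemma eig_Nb_aP : Eig (Nb ε) 0 aP :=
  Eig.of_commute ((capbp.symm).mul_left ((capbm ε).symm))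
lemma eig_Nb_aM : Eig (Nb ε) 0 (aM ε) :=
  Eig.of_commute (((cambp ε).symm).mul_left ((cambm ε).symm))

lemma eig_Na_Na : Eig (Na ε) 0 (Na ε) := Eig.of_commute rfl
lemma eig_Na_Nb : Eig (Na ε) 0 (Nb ε) := Eig.of_commute cNaNb
lemma eig_Nb_Na : Eig (Nb ε) 0 (Na ε) := Eig.of_commute cNaNb.symm
lemma eig_Nb_Nb : Eig (Nb ε) 0 (Nb ε) := Eig.of_commute rfl
lemma eig_one {u : E} : Eig u 0 (1 : E) := Eig.of_commute (Commute.one_right u)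

lemma J0_eq : J0 ε = (1/2 : ℂ) • (Na ε - Nb ε) := rfl
lemma K0_eq : K0 ε = (1/2 : ℂ) • (Na ε + Nb ε + (ε : ℂ) • (1 : E)) := rfl

lemma cNa_J0 : Commute (Na ε) (J0 ε) :=
  (((Commute.refl _).sub_right cNaNb).smul_right _)
lemma cNa_K0 : Commute (Na ε) (K0 ε) :=
  ((((Commute.refl _).add_right cNaNb).add_right ((Commute.one_right _).smul_right _)).smul_right _)
lemma cNb_J0 : Commute (Nb ε) (J0 ε) :=
  ((cNaNb.symm.sub_right (Commute.refl _)).smul_right _)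
lemma cNb_K0 : Commute (Nb ε) (K0 ε) :=
  (((cNaNb.symm.add_right (Commute.refl _)).add_right ((Commute.one_right _).smul_right _)).smul_right _)
lemma cJ0_K0 : Commute (J0 ε) (K0 ε) :=
  (cNa_K0.sub_left cNb_K0).smul_left _

/-- eigenvalues of J0 on the four generators -/
lemma eig_J0_aP : Eig (J0 ε) ((ε : ℂ)/2) aP :=
  ((eig_Na_aP.subu eig_Nb_aP).smulu (1/2)).cast (by ring)
lemma eig_J0_aM : Eig (J0 ε) (-((ε : ℂ)/2)) (aM ε) :=
  ((eig_Na_aM.subu eig_Nb_aM).smulu (1/2)).cast (by ring)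
lemma eig_J0_bP : Eig (J0 ε) (-((ε : ℂ)/2)) bP :=
  ((eig_Na_bP.subu eig_Nb_bP).smulu (1/2)).cast (by ring)
lemma eig_J0_bM : Eig (J0 ε) ((ε : ℂ)/2) (bM ε) :=
  ((eig_Na_bM.subu eig_Nb_bM).smulu (1/2)).cast (by ring)
lemma eig_smul_one (v : E) : Eig ((ε : ℂ) • (1 : E)) 0 v :=
  ((Eig.of_commute (Commute.one_left v)).smulu (ε : ℂ)).cast (mul_zero _)

lemma eig_K0_aP : Eig (K0 ε) ((ε : ℂ)/2) aP :=
  (((eig_Na_aP.addu eig_Nb_aP).addu (eig_smul_one _)).smulu (1/2)).cast (by ring)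
lemma eig_K0_aM : Eig (K0 ε) (-((ε : ℂ)/2)) (aM ε) :=
  (((eig_Na_aM.addu eig_Nb_aM).addu (eig_smul_one _)).smulu (1/2)).cast (by ring)
lemma eig_K0_bP : Eig (K0 ε) ((ε : ℂ)/2) bP :=
  (((eig_Na_bP.addu eig_Nb_bP).addu (eig_smul_one _)).smulu (1/2)).cast (by ring)
lemma eig_K0_bM : Eig (K0 ε) (-((ε : ℂ)/2)) (bM ε) :=
  (((eig_Na_bM.addu eig_Nb_bM).addu (eig_smul_one _)).smulu (1/2)).cast (by ring)

/-- the commutative coefficient algebra generated by `J0, K0` -/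
def Dalg (ε : ℝ) : Subalgebra ℂ E := Algebra.adjoin ℂ ({J0 ε, K0 ε} : Set E)

lemma J0_mem : J0 ε ∈ Dalg ε := Algebra.subset_adjoin (Set.mem_insert _ _)
lemma K0_mem : K0 ε ∈ Dalg ε :=
  Algebra.subset_adjoin (Set.mem_insert_of_mem _ rfl)
lemma Na_mem : Na ε ∈ Dalg ε := by
  have h : Na ε = J0 ε + K0 ε - ((ε : ℂ)/2) • (1 : E) := by
    rw [J0_eq, K0_eq]; module
  rw [h]
  exact sub_mem (add_mem J0_mem K0_mem) (SMulMemClass.smul_mem _ (one_mem _))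
lemma Nb_mem : Nb ε ∈ Dalg ε := by
  have h : Nb ε = K0 ε - J0 ε - ((ε : ℂ)/2) • (1 : E) := by
    rw [J0_eq, K0_eq]; module
  rw [h]
  exact sub_mem (sub_mem K0_mem J0_mem) (SMulMemClass.smul_mem _ (one_mem _))

/-- elements of `Dalg` commute with `Na` and `Nb` -/
lemma commute_Na_D {d : E} (hd : d ∈ Dalg ε) : Commute (Na ε) d := by
  induction hd using Algebra.adjoin_induction with
  | mem x hx =>
      rcases hx with h | h
      · rw [h]; exact cNa_J0
      · rw [Set.mem_singleton_iff] at h; rw [h]; exact cNa_K0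
  | algebraMap r => exact Algebra.commute_algebraMap_right r _
  | add x y _ _ hx hy => exact hx.add_right hy
  | mul x y _ _ hx hy => exact hx.mul_right hy

lemma commute_Nb_D {d : E} (hd : d ∈ Dalg ε) : Commute (Nb ε) d := by
  induction hd using Algebra.adjoin_induction with
  | mem x hx =>
      rcases hx with h | h
      · rw [h]; exact cNb_J0
      · rw [Set.mem_singleton_iff] at h; rw [h]; exact cNb_K0
  | algebraMap r => exact Algebra.commute_algebraMap_right r _
  | add x y _ _ hx hy => exact hx.add_right hy
  | mul x y _ _ hx hy => exact hx.mul_right hy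

/-- "swap" property: `d * g = g * d'` for `d, d'` in the coefficient algebra. -/
def SwapD (ε : ℝ) (g : E) : Prop :=
  ∀ d ∈ Dalg ε, ∃ d' ∈ Dalg ε, d * g = g * d'

lemma SwapD.mul {g h : E} (hg : SwapD ε g) (hh : SwapD ε h) : SwapD ε (g * h) := by
  intro d hd
  obtain ⟨d', hd', h1⟩ := hg d hd
  obtain ⟨d'', hd'', h2⟩ := hh d' hd'
  exact ⟨d'', hd'', by rw [← mul_assoc, h1, mul_assoc, h2, mul_assoc]⟩

lemma SwapD.one : SwapD ε 1 := fun d hd => ⟨d, hd, by rw [mul_one, one_mul]⟩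

lemma SwapD.pow {g : E} (hg : SwapD ε g) (n : ℕ) : SwapD ε (g ^ n) := by
  induction n with
  | zero => simpa using SwapD.one
  | succ n ih => rw [pow_succ]; exact ih.mul hg

lemma swapD_of_eig {g : E} {l k : ℂ} (hJ : Eig (J0 ε) l g) (hK : Eig (K0 ε) k g) :
    SwapD ε g := by
  intro d hd
  induction hd using Algebra.adjoin_induction with
  | mem x hx =>
      rcases hx with h | h
      · subst h
        refine ⟨J0 ε + l • 1, add_mem J0_mem (SMulMemClass.smul_mem _ (one_mem _)), ?_⟩
        rw [hJ, mul_add, mul_smul_comm, mul_one]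
      · rw [Set.mem_singleton_iff] at h; subst h
        refine ⟨K0 ε + k • 1, add_mem K0_mem (SMulMemClass.smul_mem _ (one_mem _)), ?_⟩
        rw [hK, mul_add, mul_smul_comm, mul_one]
  | algebraMap r =>
      exact ⟨algebraMap ℂ E r, Subalgebra.algebraMap_mem _ r,
        (Algebra.commute_algebraMap_left r g).eq⟩
  | add x y hx hy ihx ihy =>
      obtain ⟨x', hx', h1⟩ := ihx
      obtain ⟨y', hy', h2⟩ := ihy
      exact ⟨x' + y', add_mem hx' hy', by rw [add_mul, h1, h2, mul_add]⟩
  | mul x y hx hy ihx ihy =>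
      obtain ⟨x', hx', h1⟩ := ihx
      obtain ⟨y', hy', h2⟩ := ihy
      exact ⟨x' * y', mul_mem hx' hy', by
        rw [mul_assoc, h2, ← mul_assoc, h1, mul_assoc]⟩

lemma swapD_aP : SwapD ε aP := swapD_of_eig eig_J0_aP eig_K0_aP
lemma swapD_aM : SwapD ε (aM ε) := swapD_of_eig eig_J0_aM eig_K0_aM
lemma swapD_bP : SwapD ε bP := swapD_of_eig eig_J0_bP eig_K0_bP
lemma swapD_bM : SwapD ε (bM ε) := swapD_of_eig eig_J0_bM eig_K0_bM

lemma swapD_Apow (c : ℤ) : SwapD ε (Apow ε c) := by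
  unfold Apow; split_ifs
  · exact swapD_aP.pow _
  · exact swapD_aM.pow _

lemma swapD_Bpow (e : ℤ) : SwapD ε (Bpow ε e) := by
  unfold Bpow; split_ifs
  · exact swapD_bP.pow _
  · exact swapD_bM.pow _

end Aux


section Aux2
variable {ε : ℝ}

lemma amap_mem : aM ε * aP ∈ Dalg ε := by
  rw [haa]
  exact add_mem Na_mem (SMulMemClass.smul_mem _ (one_mem _))

lemma bmbp_mem : bM ε * bP ∈ Dalg ε := by
  rw [hbb]
  exact add_mem Nb_mem (SMulMemClass.smul_mem _ (one_mem _))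

lemma fallA (k : ℕ) : aP ^ k * aM ε ^ k ∈ Dalg ε := by
  induction k with
  | zero => simpa using one_mem _
  | succ k ih =>
      obtain ⟨d', hd', hswap⟩ := swapD_aM _ ih
      have h1 : aP ^ (k+1) * aM ε ^ (k+1) = aP * ((aP ^ k * aM ε ^ k) * aM ε) := by
        rw [pow_succ' aP, pow_succ (aM ε), mul_assoc, ← mul_assoc (aP ^ k)]
      rw [h1, hswap, ← mul_assoc]
      exact mul_mem Na_mem hd'

lemma fallA' (k : ℕ) : aM ε ^ k * aP ^ k ∈ Dalg ε := by
  induction k with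
  | zero => simpa using one_mem _
  | succ k ih =>
      obtain ⟨d', hd', hswap⟩ := swapD_aP _ ih
      have h1 : aM ε ^ (k+1) * aP ^ (k+1) = aM ε * ((aM ε ^ k * aP ^ k) * aP) := by
        rw [pow_succ' (aM ε), pow_succ aP, mul_assoc, ← mul_assoc (aM ε ^ k)]
      rw [h1, hswap, ← mul_assoc]
      exact mul_mem amap_mem hd'

lemma fallB (k : ℕ) : bP ^ k * bM ε ^ k ∈ Dalg ε := by
  induction k with
  | zero => simpa using one_mem _
  | succ k ih =>
      obtain ⟨d', hd', hswap⟩ := swapD_bM _ ih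
      have h1 : bP ^ (k+1) * bM ε ^ (k+1) = bP * ((bP ^ k * bM ε ^ k) * bM ε) := by
        rw [pow_succ' bP, pow_succ (bM ε), mul_assoc, ← mul_assoc (bP ^ k)]
      rw [h1, hswap, ← mul_assoc]
      exact mul_mem Nb_mem hd'

lemma fallB' (k : ℕ) : bM ε ^ k * bP ^ k ∈ Dalg ε := by
  induction k with
  | zero => simpa using one_mem _
  | succ k ih =>
      obtain ⟨d', hd', hswap⟩ := swapD_bP _ ih
      have h1 : bM ε ^ (k+1) * bP ^ (k+1) = bM ε * ((bM ε ^ k * bP ^ k) * bP) := by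
        rw [pow_succ' (bM ε), pow_succ bP, mul_assoc, ← mul_assoc (bM ε ^ k)]
      rw [h1, hswap, ← mul_assoc]
      exact mul_mem bmbp_mem hd'

/-- the key product rule for the `A`-ladders -/
lemma Apow_mul (c c' : ℤ) :
    ∃ d ∈ Dalg ε, Apow ε c * Apow ε c' = Apow ε (c + c') * d := by
  by_cases hc : 0 ≤ c <;> by_cases hc' : 0 ≤ c' <;> by_cases hcc : 0 ≤ c + c' <;>
    simp only [Apow, if_pos, if_neg, hc, hc', hcc, if_true, if_false] <;>
    try omega
  · -- c ≥ 0, c' ≥ 0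
    refine ⟨1, one_mem _, ?_⟩
    rw [mul_one, ← pow_add]
    congr 1; omega
  · -- c ≥ 0, c' < 0, c+c' ≥ 0
    refine ⟨aP ^ (-c').toNat * aM ε ^ (-c').toNat, fallA _, ?_⟩
    have h : c.toNat = (c + c').toNat + (-c').toNat := by omega
    rw [h, pow_add, mul_assoc]
  · -- c ≥ 0, c' < 0, c+c' < 0
    obtain ⟨d', hd', hswap⟩ := (swapD_aM.pow (-(c+c')).toNat) _ (fallA c.toNat)
    refine ⟨d', hd', ?_⟩
    have h : (-c').toNat = c.toNat + (-(c+c')).toNat := by omega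
    rw [h, pow_add, ← mul_assoc, hswap]
  · -- c < 0, c' ≥ 0, c+c' ≥ 0
    obtain ⟨d', hd', hswap⟩ := (swapD_aP.pow (c+c').toNat) _ (fallA' (-c).toNat)
    refine ⟨d', hd', ?_⟩
    have h : c'.toNat = (-c).toNat + (c + c').toNat := by omega
    rw [h, pow_add, ← mul_assoc, hswap]
  · -- c < 0, c' ≥ 0, c+c' < 0
    refine ⟨aM ε ^ c'.toNat * aP ^ c'.toNat, fallA' _, ?_⟩
    have h : (-c).toNat = (-(c+c')).toNat + c'.toNat := by omega
    rw [h, pow_add, mul_assoc]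
  · -- c < 0, c' < 0
    refine ⟨1, one_mem _, ?_⟩
    rw [mul_one, ← pow_add]
    congr 1; omega

lemma Bpow_mul (e e' : ℤ) :
    ∃ d ∈ Dalg ε, Bpow ε e * Bpow ε e' = Bpow ε (e + e') * d := by
  by_cases hc : 0 ≤ e <;> by_cases hc' : 0 ≤ e' <;> by_cases hcc : 0 ≤ e + e' <;>
    simp only [Bpow, if_pos, if_neg, hc, hc', hcc, if_true, if_false] <;>
    try omega
  · refine ⟨1, one_mem _, ?_⟩
    rw [mul_one, ← pow_add]
    congr 1; omega
  · refine ⟨bP ^ (-e').toNat * bM ε ^ (-e').toNat, fallB _, ?_⟩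
    have h : e.toNat = (e + e').toNat + (-e').toNat := by omega
    rw [h, pow_add, mul_assoc]
  · obtain ⟨d', hd', hswap⟩ := (swapD_bM.pow (-(e+e')).toNat) _ (fallB e.toNat)
    refine ⟨d', hd', ?_⟩
    have h : (-e').toNat = e.toNat + (-(e+e')).toNat := by omega
    rw [h, pow_add, ← mul_assoc, hswap]
  · obtain ⟨d', hd', hswap⟩ := (swapD_bP.pow (e+e').toNat) _ (fallB' (-e).toNat)
    refine ⟨d', hd', ?_⟩
    have h : e'.toNat = (-e).toNat + (e + e').toNat := by omega
    rw [h, pow_add, ← mul_assoc, hswap]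
  · refine ⟨bM ε ^ e'.toNat * bP ^ e'.toNat, fallB' _, ?_⟩
    have h : (-e).toNat = (-(e+e')).toNat + e'.toNat := by omega
    rw [h, pow_add, mul_assoc]
  · refine ⟨1, one_mem _, ?_⟩
    rw [mul_one, ← pow_add]
    congr 1; omega

lemma commute_Bpow_Apow (e c : ℤ) : Commute (Bpow ε e) (Apow ε c) := by
  unfold Apow Bpow
  split_ifs
  · exact (capbp.symm).pow_pow _ _
  · exact ((cambp ε).symm).pow_pow _ _
  · exact ((capbm ε).symm).pow_pow _ _
  · exact ((cambm ε).symm).pow_pow _ _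

end Aux2


section Aux3
variable {ε : ℝ}

/-- the ladder submodules -/
def Msub (ε : ℝ) (p : ℤ × ℤ) : Submodule ℂ E where
  carrier := {w | ∃ d ∈ Dalg ε, w = Apow ε p.1 * Bpow ε p.2 * d}
  add_mem' := by
    rintro x y ⟨d₁, hd₁, rfl⟩ ⟨d₂, hd₂, rfl⟩
    exact ⟨d₁ + d₂, add_mem hd₁ hd₂, by rw [mul_add]⟩
  zero_mem' := ⟨0, zero_mem _, (mul_zero _).symm⟩
  smul_mem' := by
    rintro z x ⟨d, hd, rfl⟩
    exact ⟨z • d, SMulMemClass.smul_mem _ hd, (mul_smul_comm _ _ _).symm⟩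

lemma Msub_mul (p q : ℤ × ℤ) {x y : E} (hx : x ∈ Msub ε p) (hy : y ∈ Msub ε q) :
    x * y ∈ Msub ε (p + q) := by
  obtain ⟨d₁, hd₁, rfl⟩ := hx
  obtain ⟨d₂, hd₂, rfl⟩ := hy
  obtain ⟨d₁', hd₁', h1⟩ := swapD_Apow q.1 d₁ hd₁
  obtain ⟨d₁'', hd₁'', h2⟩ := swapD_Bpow q.2 d₁' hd₁'
  obtain ⟨dA, hdA, hA⟩ := Apow_mul (ε := ε) p.1 q.1
  obtain ⟨dB, hdB, hB⟩ := Bpow_mul (ε := ε) p.2 q.2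
  obtain ⟨dA', hdA', h3⟩ := swapD_Bpow (p.2 + q.2) dA hdA
  refine ⟨dA' * (dB * (d₁'' * d₂)),
    mul_mem hdA' (mul_mem hdB (mul_mem hd₁'' hd₂)), ?_⟩
  calc Apow ε p.1 * Bpow ε p.2 * d₁ * (Apow ε q.1 * Bpow ε q.2 * d₂)
      = Apow ε p.1 * (Bpow ε p.2 * ((d₁ * Apow ε q.1) * (Bpow ε q.2 * d₂))) := by
        simp only [mul_assoc]
    _ = Apow ε p.1 * (Bpow ε p.2 * ((Apow ε q.1 * d₁') * (Bpow ε q.2 * d₂))) := by rw [h1]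
    _ = Apow ε p.1 * (Bpow ε p.2 * (Apow ε q.1 * ((d₁' * Bpow ε q.2) * d₂))) := by
        simp only [mul_assoc]
    _ = Apow ε p.1 * (Bpow ε p.2 * (Apow ε q.1 * ((Bpow ε q.2 * d₁'') * d₂))) := by rw [h2]
    _ = Apow ε p.1 * ((Bpow ε p.2 * Apow ε q.1) * (Bpow ε q.2 * (d₁'' * d₂))) := by
        simp only [mul_assoc]
    _ = Apow ε p.1 * ((Apow ε q.1 * Bpow ε p.2) * (Bpow ε q.2 * (d₁'' * d₂))) := by
        rw [(commute_Bpow_Apow p.2 q.1).eq]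
    _ = (Apow ε p.1 * Apow ε q.1) * ((Bpow ε p.2 * Bpow ε q.2) * (d₁'' * d₂)) := by
        simp only [mul_assoc]
    _ = (Apow ε (p.1 + q.1) * dA) * ((Bpow ε (p.2 + q.2) * dB) * (d₁'' * d₂)) := by
        rw [hA, hB]
    _ = Apow ε (p.1 + q.1) * ((dA * Bpow ε (p.2 + q.2)) * (dB * (d₁'' * d₂))) := by
        simp only [mul_assoc]
    _ = Apow ε (p.1 + q.1) * ((Bpow ε (p.2 + q.2) * dA') * (dB * (d₁'' * d₂))) := by rw [h3]
    _ = Apow ε (p + q).1 * Bpow ε (p + q).2 * (dA' * (dB * (d₁'' * d₂))) := by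
        simp only [mul_assoc, Prod.fst_add, Prod.snd_add]

/-- the sum of all ladder submodules -/
def MS (ε : ℝ) : Submodule ℂ E := ⨆ p : ℤ × ℤ, Msub ε p

lemma MS_mul_le : MS ε * MS ε ≤ MS ε := by
  rw [MS, Submodule.iSup_mul]
  refine iSup_le fun p => ?_
  rw [Submodule.mul_iSup]
  refine iSup_le fun q => ?_
  refine le_trans (Submodule.mul_le.2 fun x hx y hy => ?_) (le_iSup (fun p => Msub ε p) (p + q))
  exact Msub_mul p q hx hy

lemma Apow_one : Apow ε 1 = aP := by norm_num [Apow]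
lemma Apow_negone : Apow ε (-1) = aM ε := by norm_num [Apow]
lemma Apow_zero : Apow ε 0 = 1 := by norm_num [Apow]
lemma Bpow_one : Bpow ε 1 = bP := by norm_num [Bpow]
lemma Bpow_negone : Bpow ε (-1) = bM ε := by norm_num [Bpow]
lemma Bpow_zero : Bpow ε 0 = 1 := by norm_num [Bpow]

lemma adjoin_le_MS {w : E}
    (hw : w ∈ Algebra.adjoin ℂ ({aP, aM ε, bP, bM ε} : Set E)) : w ∈ MS ε := by
  induction hw using Algebra.adjoin_induction with
  | mem x hx =>
      rcases hx with h | h | h | h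
      · subst h
        refine (le_iSup (fun p => Msub ε p) ((1 : ℤ), (0 : ℤ)))
          ⟨1, one_mem _, ?_⟩
        rw [Apow_one, Bpow_zero, mul_one, mul_one]
      · subst h
        refine (le_iSup (fun p => Msub ε p) ((-1 : ℤ), (0 : ℤ)))
          ⟨1, one_mem _, ?_⟩
        rw [Apow_negone, Bpow_zero, mul_one, mul_one]
      · subst h
        refine (le_iSup (fun p => Msub ε p) ((0 : ℤ), (1 : ℤ)))
          ⟨1, one_mem _, ?_⟩
        rw [Bpow_one, Apow_zero, mul_one, one_mul]
      · rw [Set.mem_singleton_iff] at h; subst h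
        refine (le_iSup (fun p => Msub ε p) ((0 : ℤ), (-1 : ℤ)))
          ⟨1, one_mem _, ?_⟩
        rw [Bpow_negone, Apow_zero, mul_one, one_mul]
  | algebraMap r =>
      refine (le_iSup (fun p => Msub ε p) ((0 : ℤ), (0 : ℤ)))
        ⟨algebraMap ℂ E r, Subalgebra.algebraMap_mem _ r, ?_⟩
      rw [Apow_zero, Bpow_zero, mul_one, one_mul]
  | add x y _ _ hx hy => exact add_mem hx hy
  | mul x y _ _ hx hy => exact MS_mul_le (Submodule.mul_mem_mul hx hy)

/-- eigenvalues on ladders -/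
lemma eig_Na_Apow (c : ℤ) : Eig (Na ε) ((c : ℂ) * ε) (Apow ε c) := by
  unfold Apow; split_ifs with h
  · refine (eig_Na_aP.pow c.toNat).cast ?_
    have h2 : ((c.toNat : ℕ) : ℂ) = (c : ℂ) := by exact_mod_cast Int.toNat_of_nonneg h
    rw [h2]
  · refine (eig_Na_aM.pow (-c).toNat).cast ?_
    have h2 : (((-c).toNat : ℕ) : ℂ) = (-c : ℂ) := by
      exact_mod_cast Int.toNat_of_nonneg (by omega : (0:ℤ) ≤ -c)
    rw [h2]; ring

lemma eig_Nb_Bpow (e : ℤ) : Eig (Nb ε) ((e : ℂ) * ε) (Bpow ε e) := by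
  unfold Bpow; split_ifs with h
  · refine (eig_Nb_bP.pow e.toNat).cast ?_
    have h2 : ((e.toNat : ℕ) : ℂ) = (e : ℂ) := by exact_mod_cast Int.toNat_of_nonneg h
    rw [h2]
  · refine (eig_Nb_bM.pow (-e).toNat).cast ?_
    have h2 : (((-e).toNat : ℕ) : ℂ) = (-e : ℂ) := by
      exact_mod_cast Int.toNat_of_nonneg (by omega : (0:ℤ) ≤ -e)
    rw [h2]; ring

lemma eig_Na_Bpow (e : ℤ) : Eig (Na ε) 0 (Bpow ε e) := by
  unfold Bpow; split_ifs
  · exact (eig_Na_bP.pow _).cast (mul_zero _)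
  · exact (eig_Na_bM.pow _).cast (mul_zero _)

lemma eig_Nb_Apow (c : ℤ) : Eig (Nb ε) 0 (Apow ε c) := by
  unfold Apow; split_ifs
  · exact (eig_Nb_aP.pow _).cast (mul_zero _)
  · exact (eig_Nb_aM.pow _).cast (mul_zero _)

lemma eig_Na_Msub {p : ℤ × ℤ} {w : E} (hw : w ∈ Msub ε p) :
    Eig (Na ε) ((p.1 : ℂ) * ε) w := by
  obtain ⟨d, hd, rfl⟩ := hw
  exact (((eig_Na_Apow p.1).mul (eig_Na_Bpow p.2)).mul
    (Eig.of_commute (commute_Na_D hd))).cast (by ring)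

lemma eig_Nb_Msub {p : ℤ × ℤ} {w : E} (hw : w ∈ Msub ε p) :
    Eig (Nb ε) ((p.2 : ℂ) * ε) w := by
  obtain ⟨d, hd, rfl⟩ := hw
  exact (((eig_Nb_Apow p.1).mul (eig_Nb_Bpow p.2)).mul
    (Eig.of_commute (commute_Nb_D hd))).cast (by ring)

/-- the separating operator and its eigenvalues -/
def adE (u : E) : Module.End ℂ E := LinearMap.mulLeft ℂ u - LinearMap.mulRight ℂ u

def Tsep (ε : ℝ) : Module.End ℂ E := adE (Na ε) + ((Real.sqrt 2 : ℝ) : ℂ) • adE (Nb ε)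

def mu (ε : ℝ) (p : ℤ × ℤ) : ℂ :=
  (p.1 : ℂ) * (ε : ℂ) + ((Real.sqrt 2 : ℝ) : ℂ) * ((p.2 : ℂ) * (ε : ℂ))

lemma Tsep_apply (w : E) :
    Tsep ε w = (Na ε * w - w * Na ε) + ((Real.sqrt 2 : ℝ) : ℂ) • (Nb ε * w - w * Nb ε) := by
  simp only [Tsep, adE, LinearMap.add_apply, LinearMap.smul_apply, LinearMap.sub_apply,
    LinearMap.mulLeft_apply, LinearMap.mulRight_apply]

lemma mem_eigenspace_of_eig {p : ℤ × ℤ} {w : E}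
    (hNa : Eig (Na ε) ((p.1 : ℂ) * ε) w) (hNb : Eig (Nb ε) ((p.2 : ℂ) * ε) w) :
    w ∈ Module.End.eigenspace (Tsep ε) (mu ε p) := by
  rw [Module.End.mem_eigenspace_iff, Tsep_apply]
  unfold Eig at hNa hNb
  rw [hNa, hNb]
  simp only [add_sub_cancel_left]
  rw [smul_smul, ← add_smul, mu]

lemma Msub_le_eigenspace (p : ℤ × ℤ) :
    Msub ε p ≤ Module.End.eigenspace (Tsep ε) (mu ε p) := fun _ hw =>
  mem_eigenspace_of_eig (eig_Na_Msub hw) (eig_Nb_Msub hw)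

lemma mu_inj (hε : ε ≠ 0) : Function.Injective (mu ε) := by
  intro p q h
  unfold mu at h
  have h' : ((p.1 : ℝ) * ε + Real.sqrt 2 * ((p.2 : ℝ) * ε) : ℝ)
      = ((q.1 : ℝ) * ε + Real.sqrt 2 * ((q.2 : ℝ) * ε) : ℝ) := by
    exact_mod_cast h
  have h2 : ((p.1 : ℝ) + Real.sqrt 2 * (p.2 : ℝ))
      = ((q.1 : ℝ) + Real.sqrt 2 * (q.2 : ℝ)) := by
    have hh : (((p.1 : ℝ) + Real.sqrt 2 * (p.2 : ℝ))) * ε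
        = (((q.1 : ℝ) + Real.sqrt 2 * (q.2 : ℝ))) * ε := by
      ring_nf; ring_nf at h'; linarith [h']
    exact mul_right_cancel₀ hε hh
  have hpq2 : p.2 = q.2 := by
    by_contra hne
    have hne' : ((p.2 : ℝ) - (q.2 : ℝ)) ≠ 0 := by
      intro h0
      exact hne (by exact_mod_cast sub_eq_zero.1 h0)
    have hs : Real.sqrt 2 = ((q.1 - p.1 : ℤ) : ℝ) / ((p.2 - q.2 : ℤ) : ℝ) := by
      push_cast
      field_simp
      nlinarith [h2]
    have : Irrational (Real.sqrt 2) := irrational_sqrt_two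
    rw [hs] at this
    exact this ⟨((q.1 - p.1 : ℤ) : ℚ) / ((p.2 - q.2 : ℤ) : ℚ), by push_cast; ring⟩
  have hpq1 : p.1 = q.1 := by
    have : (p.1 : ℝ) = (q.1 : ℝ) := by
      rw [hpq2] at h2; linarith
    exact_mod_cast this
  exact Prod.ext hpq1 hpq2

/-- extraction of the eigencomponent -/
lemma extraction (hε : ε ≠ 0) {w : E} (p0 : ℤ × ℤ) (hw : w ∈ MS ε)
    (heig : w ∈ Module.End.eigenspace (Tsep ε) (mu ε p0)) : w ∈ Msub ε p0 := by
  have hsplit : MS ε ≤ Msub ε p0 ⊔ ⨆ (p : ℤ × ℤ) (_ : p ≠ p0), Msub ε p := by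
    refine iSup_le fun p => ?_
    by_cases h : p = p0
    · subst h; exact le_sup_left
    · exact le_trans (le_iSup₂ (f := fun (p : ℤ × ℤ) (_ : p ≠ p0) => Msub ε p) p h) le_sup_right
  obtain ⟨u, hu, v, hv, huv⟩ := Submodule.mem_sup.1 (hsplit hw)
  have hvle : (⨆ (p : ℤ × ℤ) (_ : p ≠ p0), Msub ε p) ≤
      ⨆ (ν : ℂ) (_ : ν ≠ mu ε p0), Module.End.eigenspace (Tsep ε) ν := by
    refine iSup_le fun p => iSup_le fun hp => ?_
    exact le_trans (Msub_le_eigenspace p)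
      (le_iSup₂ (f := fun (ν : ℂ) (_ : ν ≠ mu ε p0) => Module.End.eigenspace (Tsep ε) ν)
        (mu ε p) (fun h => hp (mu_inj hε h)))
  have hv0 : v = 0 := by
    have hd := Module.End.eigenspaces_iSupIndep (Tsep ε) (mu ε p0)
    have hv1 : v ∈ Module.End.eigenspace (Tsep ε) (mu ε p0) := by
      have : v = w - u := by rw [← huv]; abel
      rw [this]
      exact sub_mem heig (Msub_le_eigenspace p0 hu)
    exact (Submodule.disjoint_def.1 hd) v hv1 (hvle hv)
  rw [← huv, hv0, add_zero]
  exact hu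

end Aux3


section Aux4
variable {ε : ℝ}

lemma evalJK_eq_lincomb (P : MvPolynomial (Fin 2) ℂ) :
    evalJK ε P =
      Finsupp.linearCombination ℂ (fun d : Fin 2 →₀ ℕ => J0 ε ^ d 0 * K0 ε ^ d 1) (AddMonoidAlgebra.coeff P) := by
  rw [Finsupp.linearCombination_apply, Finsupp.sum]
  rfl

lemma evalJK_add (P Q : MvPolynomial (Fin 2) ℂ) :
    evalJK ε (P + Q) = evalJK ε P + evalJK ε Q := by
  simp only [evalJK_eq_lincomb, AddMonoidAlgebra.coeff_add, map_add]

lemma evalJK_monomial (d : Fin 2 →₀ ℕ) (z : ℂ) :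
    evalJK ε (monomial d z) = z • (J0 ε ^ d 0 * K0 ε ^ d 1) := by
  rw [evalJK_eq_lincomb, ← single_eq_monomial, AddMonoidAlgebra.coeff_single,
    Finsupp.linearCombination_single]

lemma evalJK_mul (P Q : MvPolynomial (Fin 2) ℂ) :
    evalJK ε (P * Q) = evalJK ε P * evalJK ε Q := by
  induction P using MvPolynomial.induction_on' with
  | add P P' hP hP' => rw [add_mul, evalJK_add, evalJK_add, hP, hP', add_mul]
  | monomial u a =>
      induction Q using MvPolynomial.induction_on' with
      | add Q Q' hQ hQ' => rw [mul_add, evalJK_add, evalJK_add, hQ, hQ', mul_add]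
      | monomial v b =>
          rw [monomial_mul, evalJK_monomial, evalJK_monomial, evalJK_monomial]
          rw [smul_mul_smul_comm]
          congr 1
          simp only [Finsupp.add_apply, pow_add]
          calc J0 ε ^ u 0 * J0 ε ^ v 0 * (K0 ε ^ u 1 * K0 ε ^ v 1)
              = J0 ε ^ u 0 * ((J0 ε ^ v 0 * K0 ε ^ u 1) * K0 ε ^ v 1) := by
                simp only [mul_assoc]
            _ = J0 ε ^ u 0 * ((K0 ε ^ u 1 * J0 ε ^ v 0) * K0 ε ^ v 1) := by
                rw [((cJ0_K0 (ε := ε)).symm.pow_pow _ _).eq]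
            _ = J0 ε ^ u 0 * K0 ε ^ u 1 * (J0 ε ^ v 0 * K0 ε ^ v 1) := by
                simp only [mul_assoc]

lemma evalJK_one : evalJK ε (1 : MvPolynomial (Fin 2) ℂ) = 1 := by
  have h : (1 : MvPolynomial (Fin 2) ℂ) = monomial 0 1 := by
    rw [← single_eq_monomial]; rfl
  rw [h, evalJK_monomial]
  simp

lemma exists_evalJK {d : E} (hd : d ∈ Dalg ε) : ∃ P, d = evalJK ε P := by
  induction hd using Algebra.adjoin_induction with
  | mem x hx =>
      rcases hx with h | h
      · subst h
        refine ⟨X 0, ?_⟩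
        rw [X, evalJK_monomial]
        simp [Finsupp.single_apply]
      · rw [Set.mem_singleton_iff] at h; subst h
        refine ⟨X 1, ?_⟩
        rw [X, evalJK_monomial]
        simp [Finsupp.single_apply]
  | algebraMap r =>
      refine ⟨C r, ?_⟩
      rw [C_apply, evalJK_monomial]
      simp [Algebra.algebraMap_eq_smul_one]
  | add x y _ _ hx hy =>
      obtain ⟨P, rfl⟩ := hx
      obtain ⟨Q, rfl⟩ := hy
      exact ⟨P + Q, (evalJK_add P Q).symm⟩
  | mul x y _ _ hx hy =>
      obtain ⟨P, rfl⟩ := hx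
      obtain ⟨Q, rfl⟩ := hy
      exact ⟨P * Q, (evalJK_mul P Q).symm⟩

lemma Na_eq : Na ε = J0 ε + K0 ε - ((ε : ℂ)/2) • (1 : E) := by
  rw [J0_eq, K0_eq]; module

lemma Nb_eq : Nb ε = K0 ε - J0 ε - ((ε : ℂ)/2) • (1 : E) := by
  rw [J0_eq, K0_eq]; module

end Aux4


/-- Structure of joint eigenvectors of `ad K₀` and `ad J₀` (Lemma 2.2): if `ε ≠ 0` and
`w`, in the unital subalgebra generated by `a₊,a₋,b₊,b₋`, satisfies
`2[K₀,w] = ε(c+e)w` and `2[J₀,w] = ε(c−e)w`, then `w = A_c ∘ B_e ∘ P(J₀,K₀)`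
for some polynomial `P` in two commuting variables. -/
theorem joint_eigenvector_structure (ε : ℝ) (hε : ε ≠ 0) (w : E)
    (hw : w ∈ Algebra.adjoin ℂ ({aP, aM ε, bP, bM ε} : Set E))
    (c e : ℤ)
    (hK : (2 : ℂ) • (K0 ε * w - w * K0 ε) = ((ε : ℂ) * ((c : ℂ) + (e : ℂ))) • w)
    (hJ : (2 : ℂ) • (J0 ε * w - w * J0 ε) = ((ε : ℂ) * ((c : ℂ) - (e : ℂ))) • w) :
    ∃ P : MvPolynomial (Fin 2) ℂ, w = Apow ε c * Bpow ε e * evalJK ε P := by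
  -- step 1: `w` is an eigenvector of `ad Na` and `ad Nb`
  have e3 : Na ε * w - w * Na ε = (J0 ε * w - w * J0 ε) + (K0 ε * w - w * K0 ε) := by
    rw [Na_eq, sub_mul, add_mul, mul_sub, mul_add, smul_mul_assoc, mul_smul_comm,
      one_mul, mul_one]
    abel
  have e3' : Nb ε * w - w * Nb ε = (K0 ε * w - w * K0 ε) - (J0 ε * w - w * J0 ε) := by
    rw [Nb_eq, sub_mul, sub_mul, mul_sub, mul_sub, smul_mul_assoc, mul_smul_comm,
      one_mul, mul_one]
    abel
  have e4 : (2:ℂ) • (Na ε * w - w * Na ε) = ((2:ℂ) * ((c:ℂ) * ε)) • w := by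
    rw [e3, smul_add, hK, hJ, ← add_smul]
    congr 1; ring
  have e4' : (2:ℂ) • (Nb ε * w - w * Nb ε) = ((2:ℂ) * ((e:ℂ) * ε)) • w := by
    rw [e3', smul_sub, hK, hJ]
    match_scalars; ring
  have half : ∀ (x : E) (z : ℂ), (2:ℂ) • x = ((2:ℂ) * z) • w → x = z • w := by
    intro x z h
    calc x = (2:ℂ)⁻¹ • ((2:ℂ) • x) := by rw [smul_smul]; norm_num
      _ = (2:ℂ)⁻¹ • (((2:ℂ) * z) • w) := by rw [h]
      _ = z • w := by rw [smul_smul]; congr 1; field_simp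
  have hNa : Eig (Na ε) ((c:ℂ) * ε) w := by
    unfold Eig
    have e5 := half _ _ e4
    rw [← e5]; abel
  have hNb : Eig (Nb ε) ((e:ℂ) * ε) w := by
    unfold Eig
    have e5 := half _ _ e4'
    rw [← e5]; abel
  -- step 2: extract the eigencomponent
  have hmem : w ∈ Msub ε ((c, e) : ℤ × ℤ) :=
    extraction hε ((c, e) : ℤ × ℤ) (adjoin_le_MS hw)
      (mem_eigenspace_of_eig (p := ((c, e) : ℤ × ℤ)) hNa hNb)
  obtain ⟨d, hd, rfl⟩ := hmem
  obtain ⟨P, rfl⟩ := exists_evalJK hd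
  exact ⟨P, rfl⟩
end
end

section
/- Eigenvector property of the basis elements (part of Theorem 4.1 of the paper): for all natural numbers p,q,ℓ with ℓ ≤ p+q, one has 2·[K₀, η(p,q,ℓ)] = ε·(p−q)·η(p,q,ℓ) and 2·[J₀, η(p,q,ℓ)] = ε·(p+q−2ℓ)·η(p,q,ℓ). -/
open MvPolynomial

noncomputable section

/-- `(ad J₋)(w) = J₋w − wJ₋`. -/
def adJm (ε : ℝ) (w : E) : E := Jm ε * w - w * Jm ε

/-- `η(p,q,ℓ) = (ad J₋)^ℓ (a₊^p b₋^q)`. -/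
def eta (ε : ℝ) (p q ℓ : ℕ) : E := (adJm ε)^[ℓ] (aP ^ p * bM ε ^ q)

/-! ### Auxiliary lemmas -/

lemma pderiv_comm' (i j : Fin 2) (f : P2) :
    pderiv i (pderiv j f) = pderiv j (pderiv i f) := by
  induction f using MvPolynomial.induction_on' with
  | monomial s a =>
    rcases eq_or_ne i j with rfl | hij
    · rfl
    · simp only [pderiv_monomial, Finsupp.tsub_apply, Finsupp.single_apply,
        if_neg hij, if_neg hij.symm, Nat.sub_zero]
      rw [tsub_right_comm]
      ring_nf
  | add p q hp hq => simp [hp, hq]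

-- Basic commutation relations
lemma aM_aP_comm (ε : ℝ) : aM ε * aP = aP * aM ε + (ε : ℂ) • 1 := by
  ext f
  simp [aM, aP, Module.End.mul_apply, pderiv_mul, mul_comm]
  exact add_comm _ _

lemma bM_bP_comm (ε : ℝ) : bM ε * bP = bP * bM ε + (ε : ℂ) • 1 := by
  ext f
  simp [bM, bP, Module.End.mul_apply, pderiv_mul, mul_comm]
  exact add_comm _ _

lemma aP_bP_comm : aP * bP = bP * aP := by
  refine LinearMap.ext fun f => ?_
  simp only [Module.End.mul_apply, aP, bP, LinearMap.mulLeft_apply]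
  ring

lemma aM_bP_comm (ε : ℝ) : aM ε * bP = bP * aM ε := by
  ext f
  simp [aM, bP, Module.End.mul_apply, pderiv_mul]

lemma bM_aP_comm (ε : ℝ) : bM ε * aP = aP * bM ε := by
  ext f
  simp [bM, aP, Module.End.mul_apply, pderiv_mul]

lemma aM_bM_comm (ε : ℝ) : aM ε * bM ε = bM ε * aM ε := by
  refine LinearMap.ext fun f => ?_
  simp only [Module.End.mul_apply, aM, bM, LinearMap.smul_apply, map_smul,
    Derivation.coeFn_coe]
  rw [pderiv_comm']

/-- Weight additivity: commutator eigenvalues add under products. -/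
lemma comm_mul {A u v : E} {c d : ℂ}
    (hu : A * u - u * A = c • u) (hv : A * v - v * A = d • v) :
    A * (u * v) - (u * v) * A = (c + d) • (u * v) := by
  have h : A * (u * v) - (u * v) * A = (A * u - u * A) * v + u * (A * v - v * A) := by
    simp only [sub_mul, mul_sub, mul_assoc]
    abel
  rw [h, hu, hv, smul_mul_assoc, mul_smul_comm, add_smul]

lemma comm_pow {A u : E} {c : ℂ} (hu : A * u - u * A = c • u) (n : ℕ) :
    A * u ^ n - u ^ n * A = ((n : ℂ) * c) • u ^ n := by
  induction n with
  | zero => simp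
  | succ k ih =>
    have h := comm_mul ih hu
    rw [← pow_succ] at h
    rw [h]
    congr 1
    push_cast
    ring

lemma comm_adJm {ε : ℝ} {A w : E} {c e : ℂ}
    (hJ : A * Jm ε - Jm ε * A = e • Jm ε)
    (hw : A * w - w * A = c • w) :
    A * adJm ε w - adJm ε w * A = (c + e) • adJm ε w := by
  unfold adJm
  have h1 := comm_mul hJ hw
  have h2 := comm_mul hw hJ
  have h : A * (Jm ε * w - w * Jm ε) - (Jm ε * w - w * Jm ε) * A
      = (A * (Jm ε * w) - (Jm ε * w) * A) - (A * (w * Jm ε) - (w * Jm ε) * A) := by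
    simp only [mul_sub, sub_mul]
    abel
  rw [h, h1, h2]
  module

lemma comm_iter {ε : ℝ} {A w : E} {c e : ℂ}
    (hJ : A * Jm ε - Jm ε * A = e • Jm ε)
    (hw : A * w - w * A = c • w) (ℓ : ℕ) :
    A * (adJm ε)^[ℓ] w - (adJm ε)^[ℓ] w * A = (c + (ℓ : ℂ) * e) • (adJm ε)^[ℓ] w := by
  induction ℓ with
  | zero => simpa using hw
  | succ k ih =>
    rw [Function.iterate_succ_apply', comm_adJm hJ ih]
    congr 1
    push_cast
    ring

-- Weights with respect to A := aP * aM ε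
lemma wA_aP (ε : ℝ) : (aP * aM ε) * aP - aP * (aP * aM ε) = (ε : ℂ) • aP := by
  have h : aM ε * aP - aP * aM ε = (ε : ℂ) • 1 := by rw [aM_aP_comm]; abel
  have h2 : (aP * aM ε) * aP - aP * (aP * aM ε) = aP * (aM ε * aP - aP * aM ε) := by
    simp only [mul_sub, mul_assoc]
  rw [h2, h, mul_smul_comm, mul_one]

lemma wA_aM (ε : ℝ) : (aP * aM ε) * aM ε - aM ε * (aP * aM ε) = (-(ε : ℂ)) • aM ε := by
  have h : aP * aM ε - aM ε * aP = (-(ε : ℂ)) • (1 : E) := by rw [aM_aP_comm]; module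
  have h2 : (aP * aM ε) * aM ε - aM ε * (aP * aM ε)
      = (aP * aM ε - aM ε * aP) * aM ε := by simp only [sub_mul, mul_assoc]
  rw [h2, h, smul_mul_assoc, one_mul]

lemma wA_bP (ε : ℝ) : (aP * aM ε) * bP - bP * (aP * aM ε) = (0 : ℂ) • bP := by
  rw [zero_smul, sub_eq_zero, mul_assoc, aM_bP_comm, ← mul_assoc, aP_bP_comm, mul_assoc]

lemma wA_bM (ε : ℝ) : (aP * aM ε) * bM ε - bM ε * (aP * aM ε) = (0 : ℂ) • bM ε := by
  rw [zero_smul, sub_eq_zero, mul_assoc, aM_bM_comm, ← mul_assoc, ← bM_aP_comm, mul_assoc]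

-- Weights with respect to B := bP * bM ε
lemma wB_bP (ε : ℝ) : (bP * bM ε) * bP - bP * (bP * bM ε) = (ε : ℂ) • bP := by
  have h : bM ε * bP - bP * bM ε = (ε : ℂ) • 1 := by rw [bM_bP_comm]; abel
  have h2 : (bP * bM ε) * bP - bP * (bP * bM ε) = bP * (bM ε * bP - bP * bM ε) := by
    simp only [mul_sub, mul_assoc]
  rw [h2, h, mul_smul_comm, mul_one]

lemma wB_bM (ε : ℝ) : (bP * bM ε) * bM ε - bM ε * (bP * bM ε) = (-(ε : ℂ)) • bM ε := by
  have h : bP * bM ε - bM ε * bP = (-(ε : ℂ)) • (1 : E) := by rw [bM_bP_comm]; module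
  have h2 : (bP * bM ε) * bM ε - bM ε * (bP * bM ε)
      = (bP * bM ε - bM ε * bP) * bM ε := by simp only [sub_mul, mul_assoc]
  rw [h2, h, smul_mul_assoc, one_mul]

lemma wB_aP (ε : ℝ) : (bP * bM ε) * aP - aP * (bP * bM ε) = (0 : ℂ) • aP := by
  rw [zero_smul, sub_eq_zero, mul_assoc, bM_aP_comm, ← mul_assoc, ← aP_bP_comm, mul_assoc]

lemma wB_aM (ε : ℝ) : (bP * bM ε) * aM ε - aM ε * (bP * bM ε) = (0 : ℂ) • aM ε := by
  rw [zero_smul, sub_eq_zero, mul_assoc, ← aM_bM_comm, ← mul_assoc, ← aM_bP_comm, mul_assoc]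

-- Weight of Jm
lemma wA_Jm (ε : ℝ) : (aP * aM ε) * Jm ε - Jm ε * (aP * aM ε) = (-(ε : ℂ)) • Jm ε := by
  have h := comm_mul (wA_aM ε) (wA_bP ε)
  rw [add_zero] at h
  exact h

lemma wB_Jm (ε : ℝ) : (bP * bM ε) * Jm ε - Jm ε * (bP * bM ε) = (ε : ℂ) • Jm ε := by
  have h := comm_mul (wB_aM ε) (wB_bP ε)
  rw [zero_add] at h
  exact h

-- Weights of eta
lemma wA_eta (ε : ℝ) (p q ℓ : ℕ) :
    (aP * aM ε) * eta ε p q ℓ - eta ε p q ℓ * (aP * aM ε)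
      = ((ε : ℂ) * ((p : ℂ) - (ℓ : ℂ))) • eta ε p q ℓ := by
  have hw := comm_mul (comm_pow (wA_aP ε) p) (comm_pow (wA_bM ε) q)
  have h := comm_iter (wA_Jm ε) hw ℓ
  rw [eta, h]
  congr 1
  ring

lemma wB_eta (ε : ℝ) (p q ℓ : ℕ) :
    (bP * bM ε) * eta ε p q ℓ - eta ε p q ℓ * (bP * bM ε)
      = ((ε : ℂ) * ((ℓ : ℂ) - (q : ℂ))) • eta ε p q ℓ := by
  have hw := comm_mul (comm_pow (wB_aP ε) p) (comm_pow (wB_bM ε) q)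
  have h := comm_iter (wB_Jm ε) hw ℓ
  rw [eta, h]
  congr 1
  ring

/-- Eigenvector property of the basis elements (part of Theorem 4.1):
`2[K₀, η(p,q,ℓ)] = ε(p−q)·η(p,q,ℓ)` and `2[J₀, η(p,q,ℓ)] = ε(p+q−2ℓ)·η(p,q,ℓ)`. -/
theorem eta_joint_eigenvector (ε : ℝ) (p q ℓ : ℕ) (hℓ : ℓ ≤ p + q) :
    (2 : ℂ) • (K0 ε * eta ε p q ℓ - eta ε p q ℓ * K0 ε)
        = ((ε : ℂ) * ((p : ℂ) - (q : ℂ))) • eta ε p q ℓ ∧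
    (2 : ℂ) • (J0 ε * eta ε p q ℓ - eta ε p q ℓ * J0 ε)
        = ((ε : ℂ) * ((p : ℂ) + (q : ℂ) - 2 * (ℓ : ℂ))) • eta ε p q ℓ := by
  have hA := wA_eta ε p q ℓ
  have hB := wB_eta ε p q ℓ
  set η := eta ε p q ℓ with hη
  constructor
  · have h : K0 ε * η - η * K0 ε
        = (1/2 : ℂ) • (((aP * aM ε) * η - η * (aP * aM ε))
            + ((bP * bM ε) * η - η * (bP * bM ε))) := by
      rw [K0, smul_mul_assoc, mul_smul_comm]
      simp only [add_mul, mul_add, smul_mul_assoc, mul_smul_comm, one_mul, mul_one]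
      module
    rw [h, hA, hB]
    module
  · have h : J0 ε * η - η * J0 ε
        = (1/2 : ℂ) • (((aP * aM ε) * η - η * (aP * aM ε))
            - ((bP * bM ε) * η - η * (bP * bM ε))) := by
      rw [J0, smul_mul_assoc, mul_smul_comm]
      simp only [sub_mul, mul_sub]
      module
    rw [h, hA, hB]
    module
end
end

section
/- Sign of the norm (second part of Theorem 5.2 of the paper): let ε > 0 and R̂ > 0 be real numbers, let p, q be natural numbers, and set P = (p!·q!/(p+q+1)!) · Π_{s=1}^{q} (2R̂ − ε·s) · Π_{s=1}^{p} (2R̂ + ε·s). Then: (i) if 2R̂/ε > q then P > 0; (ii) if 2R̂/ε is an integer with 1 ≤ 2R̂/ε ≤ q then P = 0; (iii) if 2R̂/ε is not an integer and 0 < 2R̂/ε < q, then the sign of P equals (−1)^(q − ⌊2R̂/ε⌋), where ⌊·⌋ is the floor function. -/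
/-- Sign of the norm (second part of Theorem 5.2): for `ε > 0`, `R̂ > 0` and
`P = (p!q!/(p+q+1)!)·Π_{s=1}^{q}(2R̂ − εs)·Π_{s=1}^{p}(2R̂ + εs)`:
(i) if `2R̂/ε > q` then `P > 0`; (ii) if `2R̂/ε` is an integer with
`1 ≤ 2R̂/ε ≤ q` then `P = 0`; (iii) if `2R̂/ε` is not an integer and
`0 < 2R̂/ε < q` then `sign P = (−1)^(q − ⌊2R̂/ε⌋)`. -/
theorem sign_of_norm (ε Rhat : ℝ) (hε : 0 < ε) (hR : 0 < Rhat) (p q : ℕ) (P : ℝ)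
    (hP : P = ((p.factorial : ℝ) * (q.factorial : ℝ) / ((p + q + 1).factorial : ℝ)) *
        (∏ s ∈ Finset.Icc 1 q, (2 * Rhat - ε * (s : ℝ))) *
        (∏ s ∈ Finset.Icc 1 p, (2 * Rhat + ε * (s : ℝ)))) :
    ((q : ℝ) < 2 * Rhat / ε → 0 < P) ∧
    (∀ z : ℤ, 2 * Rhat / ε = (z : ℝ) → 1 ≤ z → z ≤ (q : ℤ) → P = 0) ∧
    ((¬ ∃ z : ℤ, 2 * Rhat / ε = (z : ℝ)) → 0 < 2 * Rhat / ε → 2 * Rhat / ε < (q : ℝ) →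
      Real.sign P = (-1 : ℝ) ^ ((q : ℤ) - ⌊2 * Rhat / ε⌋)) := by
  set t := 2 * Rhat / ε with ht
  have htε : ε * t = 2 * Rhat := by rw [ht]; field_simp [hε.ne']
  have hC : 0 < (p.factorial : ℝ) * (q.factorial : ℝ) / ((p + q + 1).factorial : ℝ) := by
    positivity
  have hB : 0 < ∏ s ∈ Finset.Icc 1 p, (2 * Rhat + ε * (s : ℝ)) := by
    apply Finset.prod_pos; intro s hs; positivity
  refine ⟨?_, ?_, ?_⟩
  · intro hqt
    have hA : 0 < ∏ s ∈ Finset.Icc 1 q, (2 * Rhat - ε * (s : ℝ)) := by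
      apply Finset.prod_pos
      intro s hs
      have hs' : (s : ℝ) ≤ q := by exact_mod_cast (Finset.mem_Icc.mp hs).2
      have hst : (s : ℝ) < t := lt_of_le_of_lt hs' hqt
      nlinarith
    rw [hP]; positivity
  · intro z hz h1 h2
    have hmem : z.toNat ∈ Finset.Icc 1 q := by
      simp only [Finset.mem_Icc]; omega
    have hzero : (2 * Rhat - ε * ((z.toNat : ℕ) : ℝ)) = 0 := by
      have hcast : (((z.toNat : ℕ) : ℤ) : ℝ) = (z : ℝ) := by
        norm_cast; omega
      push_cast at hcast ⊢
      rw [hcast]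
      rw [hz] at htε
      linarith
    rw [hP, Finset.prod_eq_zero hmem hzero]
    ring
  · intro hni ht0 htq
    set n : ℕ := ⌊t⌋.toNat with hn
    have hfl0 : 0 ≤ ⌊t⌋ := Int.floor_nonneg.mpr ht0.le
    have hfln : (⌊t⌋ : ℤ) = (n : ℤ) := by omega
    have hntlt : (n : ℝ) < t := by
      rcases lt_or_eq_of_le (Int.floor_le t) with h | h
      · calc (n : ℝ) = ((⌊t⌋ : ℤ) : ℝ) := by exact_mod_cast hfln.symm
          _ < t := h
      · exact absurd ⟨⌊t⌋, h.symm⟩ hni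
    have htn1 : t < (n : ℝ) + 1 := by
      have := Int.lt_floor_add_one t
      calc t < (⌊t⌋ : ℝ) + 1 := this
        _ = (n : ℝ) + 1 := by exact_mod_cast congrArg (fun z : ℤ => (z : ℝ) + 1) hfln
    have hnq : n < q := by
      have : (⌊t⌋ : ℝ) < (q : ℝ) := lt_of_le_of_lt (Int.floor_le t) htq
      have : ⌊t⌋ < (q : ℤ) := by exact_mod_cast this
      omega
    -- rewrite the q-product
    have hsplit : (∏ s ∈ Finset.Icc 1 q, (2 * Rhat - ε * (s : ℝ)))
        = (∏ s ∈ Finset.Ioc 0 n, (2 * Rhat - ε * (s : ℝ)))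
          * (∏ s ∈ Finset.Ioc n q, (2 * Rhat - ε * (s : ℝ))) := by
      rw [Finset.prod_Ioc_consecutive _ (Nat.zero_le n) hnq.le]
      congr 1
    have hpos1 : 0 < ∏ s ∈ Finset.Ioc 0 n, (2 * Rhat - ε * (s : ℝ)) := by
      apply Finset.prod_pos
      intro s hs
      have hs' : (s : ℝ) ≤ n := by exact_mod_cast (Finset.mem_Ioc.mp hs).2
      nlinarith
    have hneg : (∏ s ∈ Finset.Ioc n q, (2 * Rhat - ε * (s : ℝ)))
        = (-1 : ℝ) ^ (q - n) * ∏ s ∈ Finset.Ioc n q, (ε * (s : ℝ) - 2 * Rhat) := by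
      have hc : ∀ s ∈ Finset.Ioc n q, (2 * Rhat - ε * (s : ℝ))
          = (-1 : ℝ) * (ε * (s : ℝ) - 2 * Rhat) := fun s _ => by ring
      rw [Finset.prod_congr rfl hc, Finset.prod_mul_distrib, Finset.prod_const, Nat.card_Ioc]
    have hpos2 : 0 < ∏ s ∈ Finset.Ioc n q, (ε * (s : ℝ) - 2 * Rhat) := by
      apply Finset.prod_pos
      intro s hs
      have hs' : (n : ℝ) + 1 ≤ (s : ℝ) := by
        have := (Finset.mem_Ioc.mp hs).1
        exact_mod_cast Nat.succ_le_of_lt this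
      nlinarith
    set D : ℝ := ((p.factorial : ℝ) * (q.factorial : ℝ) / ((p + q + 1).factorial : ℝ))
        * ((∏ s ∈ Finset.Ioc 0 n, (2 * Rhat - ε * (s : ℝ)))
          * (∏ s ∈ Finset.Ioc n q, (ε * (s : ℝ) - 2 * Rhat)))
        * (∏ s ∈ Finset.Icc 1 p, (2 * Rhat + ε * (s : ℝ))) with hD
    have hDpos : 0 < D := by
      rw [hD]
      have := mul_pos hpos1 hpos2
      positivity
    have hPD : P = (-1 : ℝ) ^ (q - n) * D := by
      rw [hP, hsplit, hneg, hD]; ring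
    have hexp : (-1 : ℝ) ^ ((q : ℤ) - ⌊t⌋) = (-1 : ℝ) ^ (q - n) := by
      have h1 : (q : ℤ) - ⌊t⌋ = ((q - n : ℕ) : ℤ) := by omega
      rw [h1, zpow_natCast]
    rw [hexp, hPD]
    rcases Nat.even_or_odd (q - n) with he | ho
    · rw [he.neg_one_pow, one_mul]
      exact Real.sign_of_pos hDpos
    · rw [ho.neg_one_pow, neg_one_mul]
      exact Real.sign_of_neg (neg_neg_iff_pos.mpr hDpos)
end

section
/- Vanishing on low-dimensional representations (equation (57), the lemma of Section 5.3 of the paper): for all natural numbers p, q, ℓ, d with ℓ ≤ p+q and d < q, the operator η(p,q,ℓ) maps every homogeneous polynomial of degree d in ℂ[x,y] to 0. (In the paper's notation: φ^r_k(ξ(n,r,m)) = 0 whenever n ≥ 2k + r + 1, with d = 2k.) -/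
open MvPolynomial

noncomputable section

-- auxiliary lemmas

lemma pderiv_isHomog {d : ℕ} {f : P2} (hf : f.IsHomogeneous (d+1)) (i : Fin 2) :
    (pderiv i f).IsHomogeneous d := by
  conv_lhs => rw [← support_sum_monomial_coeff f]
  rw [map_sum]
  apply IsHomogeneous.sum
  intro v hv
  rw [pderiv_monomial]
  by_cases h : v i = 0
  · simp only [h, Nat.cast_zero, mul_zero, monomial_zero]
    exact isHomogeneous_zero (Fin 2) ℂ d
  · apply isHomogeneous_monomial
    have hd : v.degree = d + 1 := by
      rw [Finsupp.degree_eq_weight_one]; exact hf (mem_support_iff.mp hv)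
    have hv1 : v = (v - Finsupp.single i 1) + Finsupp.single i 1 := by
      ext j
      by_cases hj : j = i
      · subst hj
        simp [Nat.sub_add_cancel (Nat.one_le_iff_ne_zero.mpr h)]
      · simp [Finsupp.single_apply, Ne.symm hj]
    have : (v - Finsupp.single i 1).degree + (Finsupp.single i 1).degree = d + 1 := by
      rw [Finsupp.degree_eq_weight_one] at hd ⊢
      rw [← map_add, ← hv1, hd]
    simpa [Finsupp.degree_single] using this

lemma pderiv_of_homog_zero {f : P2} (hf : f.IsHomogeneous 0) (i : Fin 2) :
    pderiv i f = 0 := by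
  apply pderiv_eq_zero_of_notMem_vars
  rw [mem_vars]
  rintro ⟨m, hm, hi⟩
  have htd : f.totalDegree = 0 := Nat.le_zero.mp hf.totalDegree_le
  have := (totalDegree_eq_zero_iff (Fin 2) f).mp htd m hm i
  simp [Finsupp.mem_support_iff, this] at hi

lemma pderiv_iter_of_low_deg {q d : ℕ} (hd : d < q) {f : P2} (hf : f.IsHomogeneous d)
    (i : Fin 2) : (pderiv i (R := ℂ))^[q] f = 0 := by
  induction q generalizing d f with
  | zero => omega
  | succ q ih =>
    rw [Function.iterate_succ_apply]
    cases d with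
    | zero =>
      rw [pderiv_of_homog_zero hf]
      simp
    | succ d =>
      exact ih (by omega) (pderiv_isHomog hf i)

lemma Jm_homog (ε : ℝ) {d : ℕ} {f : P2} (hf : f.IsHomogeneous d) :
    (Jm ε f).IsHomogeneous d := by
  have : Jm ε f = (ε : ℂ) • pderiv 0 ((X 1 : P2) * f) := rfl
  rw [this]
  have h1 : ((X 1 : P2) * f).IsHomogeneous (d + 1) := by
    simpa [add_comm] using (isHomogeneous_X ℂ (1 : Fin 2)).mul hf
  rw [smul_eq_C_mul]
  exact (pderiv_isHomog h1 0).C_mul _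

/-- Vanishing on low-dimensional representations (equation (57), Section 5.3):
for `ℓ ≤ p+q` and `d < q`, the operator `η(p,q,ℓ)` annihilates every homogeneous
polynomial of degree `d` in ℂ[x,y]. -/
theorem eta_vanishes_on_low_degree (ε : ℝ) (p q ℓ d : ℕ)
    (hℓ : ℓ ≤ p + q) (hd : d < q) :
    ∀ f : P2, f.IsHomogeneous d → eta ε p q ℓ f = 0 := by
  induction ℓ with
  | zero =>
    intro f hf
    have hb : (bM ε ^ q) f = 0 := by
      have : (bM ε) ^ q = ((ε:ℂ)^q) • ((pderiv (1 : Fin 2)).toLinearMap ^ q) := by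
        rw [bM, smul_pow]
      rw [this]
      simp only [LinearMap.smul_apply, Module.End.pow_apply]
      have : ((pderiv (1 : Fin 2)).toLinearMap : P2 →ₗ[ℂ] P2)^[q] f = (pderiv (1 : Fin 2) (R := ℂ))^[q] f := rfl
      rw [this, pderiv_iter_of_low_deg hd hf, smul_zero]
    show (aP ^ p * bM ε ^ q) f = 0
    rw [Module.End.mul_apply, hb, map_zero]
  | succ ℓ ih =>
    intro f hf
    rw [eta, Function.iterate_succ_apply']
    have h1 := ih (by omega) f hf
    have h2 := ih (by omega) (Jm ε f) (Jm_homog ε hf)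
    rw [eta] at h1 h2
    show (Jm ε * _ - _ * Jm ε) f = 0
    rw [LinearMap.sub_apply, Module.End.mul_apply, Module.End.mul_apply, h1, map_zero, h2, sub_zero]
end
end

section
/- The noncommutative vector-field relation Σ_m x^m X_m = Σ_m X_m x^m = 0 (Section 6.3 of the paper) holds exactly, for every ε: in E one has J₊ ∘ b₊² + 2·J₀ ∘ a₊ ∘ b₊ − J₋ ∘ a₊² = 0 and also b₊² ∘ J₊ + 2·a₊ ∘ b₊ ∘ J₀ − a₊² ∘ J₋ = 0. (Here J₊ = ξ(1,0,1), −√2·J₀ = ξ(1,0,0), −J₋ = ξ(1,0,−1) are the normalized coordinates and a₊², √2·a₊b₊, b₊² are the basis vector fields ξ(1,1,m).) -/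
open MvPolynomial

noncomputable section

/-- The noncommutative vector-field relation `Σ_m x^m X_m = Σ_m X_m x^m = 0`
(Section 6.3) holds exactly for every `ε`:
`J₊b₊² + 2J₀a₊b₊ − J₋a₊² = 0` and `b₊²J₊ + 2a₊b₊J₀ − a₊²J₋ = 0`. -/
theorem vector_field_relation (ε : ℝ) :
    (Jp ε * bP ^ 2 + (2 : ℂ) • (J0 ε * aP * bP) - Jm ε * aP ^ 2 = 0) ∧
    (bP ^ 2 * Jp ε + (2 : ℂ) • (aP * bP * J0 ε) - aP ^ 2 * Jm ε = 0) := by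
  have h0 : (2 : ℂ) • (J0 ε * aP * bP) = (aP * aM ε - bP * bM ε) * aP * bP := by
    simp only [J0, smul_mul_assoc, smul_smul]
    norm_num
  have h0' : (2 : ℂ) • (aP * bP * J0 ε) = aP * bP * (aP * aM ε - bP * bM ε) := by
    simp only [J0, mul_smul_comm, smul_smul]
    norm_num
  rw [h0, h0']
  constructor <;>
  · apply LinearMap.ext; intro p
    simp [Jp, Jm, aP, bP, aM, bM, Module.End.mul_apply, pow_succ,
      LinearMap.mulLeft_apply, pderiv_mul, pderiv_X, Algebra.smul_def]
    ring
end
end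

section
/- Linear independence of the basis of Ψ (basis claim of Theorem 4.1 of the paper): if ε ≠ 0, then the family {η(p,q,ℓ) : p, q, ℓ ∈ ℕ, ℓ ≤ p+q} is linearly independent over ℂ in E. -/
open MvPolynomial

noncomputable section

-- exponent function and monomials
def fd (N M : ℕ) : Fin 2 →₀ ℕ := Finsupp.single 0 N + Finsupp.single 1 M
def mon (N M : ℕ) : P2 := monomial (fd N M) 1

lemma fd_apply0 (N M : ℕ) : fd N M 0 = N := by simp [fd]
lemma fd_apply1 (N M : ℕ) : fd N M 1 = M := by simp [fd]

lemma fd_inj {N M N' M' : ℕ} (h : fd N M = fd N' M') : N = N' ∧ M = M' := by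
  constructor
  · have := DFunLike.congr_fun h 0
    simpa [fd_apply0] using this
  · have := DFunLike.congr_fun h 1
    simpa [fd_apply1] using this

lemma fd_add0 (N M : ℕ) : Finsupp.single (0 : Fin 2) 1 + fd N M = fd (N+1) M := by
  ext a; fin_cases a <;> simp [fd, Finsupp.single_apply] <;> omega

lemma fd_add1 (N M : ℕ) : Finsupp.single (1 : Fin 2) 1 + fd N M = fd N (M+1) := by
  ext a; fin_cases a <;> simp [fd, Finsupp.single_apply] <;> omega

lemma fd_sub0 (N M : ℕ) : fd N M - Finsupp.single 0 1 = fd (N-1) M := by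
  ext a; fin_cases a <;> simp [fd, Finsupp.single_apply]

lemma fd_sub1 (N M : ℕ) : fd N M - Finsupp.single 1 1 = fd N (M-1) := by
  ext a; fin_cases a <;> simp [fd, Finsupp.single_apply]

lemma aP_mon (N M : ℕ) : aP (mon N M) = mon (N+1) M := by
  simp only [aP, LinearMap.mulLeft_apply, mon, X]
  rw [monomial_mul, one_mul, fd_add0]

lemma bP_mon (N M : ℕ) : bP (mon N M) = mon N (M+1) := by
  simp only [bP, LinearMap.mulLeft_apply, mon, X]
  rw [monomial_mul, one_mul, fd_add1]

lemma aM_mon (ε : ℝ) (N M : ℕ) : aM ε (mon N M) = ((ε : ℂ) * N) • mon (N-1) M := by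
  simp only [aM, mon, LinearMap.smul_apply, Derivation.coeFn_coe]
  rw [pderiv_monomial, fd_sub0, fd_apply0, smul_monomial, smul_monomial]
  congr 1
  simp [mul_comm]

lemma bM_mon (ε : ℝ) (N M : ℕ) : bM ε (mon N M) = ((ε : ℂ) * M) • mon N (M-1) := by
  simp only [bM, mon, LinearMap.smul_apply, Derivation.coeFn_coe]
  rw [pderiv_monomial, fd_sub1, fd_apply1, smul_monomial, smul_monomial]
  congr 1
  simp [mul_comm]

lemma Jm_mon (ε : ℝ) (N M : ℕ) : Jm ε (mon N M) = ((ε : ℂ) * N) • mon (N-1) (M+1) := by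
  simp only [Jm, Module.End.mul_apply, bP_mon, aM_mon]

lemma aP_pow_mon (p N M : ℕ) : (aP ^ p) (mon N M) = mon (N+p) M := by
  induction p with
  | zero => simp
  | succ p ih =>
      rw [pow_succ', Module.End.mul_apply, ih, aP_mon, Nat.add_assoc]

lemma bM_pow_mon (ε : ℝ) (q N M : ℕ) :
    (bM ε ^ q) (mon N M) = ((ε : ℂ)^q * (M.descFactorial q : ℂ)) • mon N (M-q) := by
  induction q generalizing M with
  | zero => simp
  | succ q ih =>
      rw [pow_succ, Module.End.mul_apply, bM_mon, map_smul, ih]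
      rw [smul_smul]
      rcases M with _ | M
      · simp
      · rw [Nat.succ_descFactorial_succ]
        have : M + 1 - 1 - q = M + 1 - (q+1) := by omega
        rw [this]
        congr 1
        push_cast
        ring

-- cc : the coefficient in eta(p,q,ℓ)(mon N M) = cc • mon (N+p-ℓ) (M+ℓ-q)
def cc (ε : ℝ) (p q : ℕ) : ℕ → ℕ → ℕ → ℂ
  | 0, _, M => (ε:ℂ)^q * (M.descFactorial q : ℂ)
  | (ℓ+1), N, M =>
      (ε:ℂ) * (((N + p - ℓ : ℕ) : ℂ) * cc ε p q ℓ N M - (N:ℂ) * cc ε p q ℓ (N-1) (M+1))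

lemma ccA (ε : ℝ) (p q : ℕ) : ∀ ℓ N M, M + ℓ ≤ q →
    cc ε p q ℓ N M = (-1)^ℓ * (ε:ℂ)^(ℓ+q) * (N.descFactorial ℓ : ℂ) * (((M+ℓ).descFactorial q : ℂ))
  | 0, N, M, _ => by simp [cc]
  | (ℓ+1), N, M, h => by
      rw [cc, ccA ε p q ℓ N M (by omega), ccA ε p q ℓ (N-1) (M+1) (by omega)]
      have h1 : ((M+ℓ).descFactorial q : ℂ) = 0 := by
        norm_cast
        exact Nat.descFactorial_eq_zero_iff_lt.2 (by omega)
      rw [h1]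
      have h2 : (N : ℂ) * ((N-1).descFactorial ℓ : ℂ) = (N.descFactorial (ℓ+1) : ℂ) := by
        rcases N with _ | N
        · simp
        · rw [Nat.succ_descFactorial_succ]; push_cast; ring
      have h3 : M + 1 + ℓ = M + (ℓ+1) := by omega
      rw [h3, ← h2]
      push_cast
      ring

lemma ccL1 (ε : ℝ) (p q ℓ N M : ℕ) (h : M + ℓ < q) : cc ε p q ℓ N M = 0 := by
  rw [ccA ε p q ℓ N M (le_of_lt h)]
  have : ((M+ℓ).descFactorial q : ℂ) = 0 := by
    norm_cast
    exact Nat.descFactorial_eq_zero_iff_lt.2 (by omega)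
  rw [this, mul_zero]

lemma ccL2 (ε : ℝ) (p q : ℕ) : ∀ ℓ N M, N + p < ℓ → cc ε p q ℓ N M = 0
  | 0, N, M, h => by omega
  | (ℓ+1), N, M, h => by
      rw [cc]
      rcases Nat.lt_or_ge (N + p) ℓ with h' | h'
      · rw [ccL2 ε p q ℓ N M h']
        rcases N with _ | N
        · simp
        · rw [Nat.add_sub_cancel, ccL2 ε p q ℓ N (M+1) (by omega)]
          simp
      · have hNp : N + p = ℓ := by omega
        have : ((N + p - ℓ : ℕ) : ℂ) = 0 := by rw [hNp]; simp
        rw [this]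
        rcases N with _ | N
        · simp
        · rw [Nat.add_sub_cancel, ccL2 ε p q ℓ N (M+1) (by omega)]
          simp

lemma ccB0 (ε : ℝ) (p q : ℕ) : ∀ ℓ N M, N + M < q → cc ε p q ℓ N M = 0
  | 0, N, M, h => by
      rw [cc]
      have : (M.descFactorial q : ℂ) = 0 := by
        norm_cast
        exact Nat.descFactorial_eq_zero_iff_lt.2 (by omega)
      rw [this, mul_zero]
  | (ℓ+1), N, M, h => by
      rw [cc, ccB0 ε p q ℓ N M h]
      rcases N with _ | N
      · simp
      · rw [Nat.add_sub_cancel, ccB0 ε p q ℓ N (M+1) (by omega)]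
        simp

lemma natKey (p ℓ n : ℕ) :
    (n+1+p-ℓ) * ℓ.choose (n+1) * (n+1).factorial * p.descFactorial (ℓ-(n+1))
      + ℓ.choose n * (n+1).factorial * p.descFactorial (ℓ-n)
    = (ℓ+1).choose (n+1) * (n+1).factorial * p.descFactorial (ℓ-n) := by
  rcases Nat.lt_or_ge ℓ (n+1) with hl | hl
  · have h1 : ℓ.choose (n+1) = 0 := Nat.choose_eq_zero_of_lt (by omega)
    rcases eq_or_lt_of_le (show ℓ ≤ n by omega) with he | he
    · subst he
      simp [Nat.choose_self, Nat.choose_succ_self_right, h1]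
    · have h2 : ℓ.choose n = 0 := Nat.choose_eq_zero_of_lt (by omega)
      have h3 : (ℓ+1).choose (n+1) = 0 := Nat.choose_eq_zero_of_lt (by omega)
      simp [h1, h2, h3]
  · have hd : ℓ - n = (ℓ - (n+1)) + 1 := by omega
    have h2 : n+1+p-ℓ = p - (ℓ-(n+1)) := by omega
    rw [hd, Nat.descFactorial_succ, h2, Nat.choose_succ_succ]
    ring

lemma ccB (ε : ℝ) (p q : ℕ) : ∀ ℓ N M, N + M = q →
    cc ε p q ℓ N M = (-1)^N * (ε:ℂ)^(ℓ+q) * (ℓ.choose N : ℂ) * (N.factorial : ℂ)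
      * (q.factorial : ℂ) * (p.descFactorial (ℓ-N) : ℂ)
  | 0, N, M, h => by
      rw [cc]
      rcases N with _ | n
      · have hM : M = q := by omega
        subst hM
        simp [Nat.descFactorial_self]
      · have h1 : (M.descFactorial q) = 0 := Nat.descFactorial_eq_zero_iff_lt.2 (by omega)
        have h2 : Nat.choose 0 (n+1) = 0 := rfl
        rw [h1, h2]
        simp
  | (ℓ+1), N, M, h => by
      rw [cc]
      rcases N with _ | n
      · rw [ccB ε p q ℓ 0 M h]
        have hd : p.descFactorial (ℓ+1-0) = (p-ℓ) * p.descFactorial ℓ := by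
          rw [Nat.sub_zero, Nat.descFactorial_succ]
        rw [hd]
        simp only [Nat.cast_zero, zero_mul, mul_zero, sub_zero, Nat.sub_zero, Nat.zero_add,
          Nat.choose_zero_right, Nat.factorial_zero]
        push_cast
        ring
      · rw [ccB ε p q ℓ (n+1) M h, Nat.add_sub_cancel, ccB ε p q ℓ n (M+1) (by omega),
          Nat.succ_sub_succ]
        have e1 : (((n+1+p-ℓ) * ℓ.choose (n+1) * (n+1).factorial * p.descFactorial (ℓ-(n+1))
            + ℓ.choose n * (n+1).factorial * p.descFactorial (ℓ-n) : ℕ) : ℂ)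
            = (((ℓ+1).choose (n+1) * (n+1).factorial * p.descFactorial (ℓ-n) : ℕ) : ℂ) := by
          exact_mod_cast congrArg (Nat.cast (R := ℂ)) (natKey p ℓ n)
        push_cast [Nat.factorial_succ] at e1 ⊢
        linear_combination ((-1:ℂ)^(n+1) * (ε:ℂ)^(ℓ+1+q) * (q.factorial:ℂ)) * e1

lemma etaA (ε : ℝ) (p q : ℕ) : ∀ ℓ N M,
    eta ε p q ℓ (mon N M) = cc ε p q ℓ N M • mon (N+p-ℓ) (M+ℓ-q)
  | 0, N, M => by
      rw [eta]
      simp only [Function.iterate_zero, id_eq]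
      rw [Module.End.mul_apply, bM_pow_mon, map_smul, aP_pow_mon, cc]
      norm_num
  | (ℓ+1), N, M => by
      have hstep : eta ε p q (ℓ+1) = adJm ε (eta ε p q ℓ) := by
        simp only [eta, Function.iterate_succ_apply']
      rw [hstep, adJm, LinearMap.sub_apply, Module.End.mul_apply, Module.End.mul_apply,
        etaA ε p q ℓ N M, map_smul, Jm_mon, Jm_mon, map_smul,
        etaA ε p q ℓ (N-1) (M+1), cc]
      have ex1 : N+p-ℓ-1 = N+p-(ℓ+1) := by omega
      rcases Nat.lt_or_ge (M+ℓ) q with hy | hy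
      · have hc : cc ε p q ℓ N M = 0 := ccL1 ε p q ℓ N M hy
        rw [hc]
        rcases N with _ | n
        · simp
        · rw [Nat.add_sub_cancel]
          have ex2 : n+p-ℓ = n+1+p-(ℓ+1) := by omega
          have ey2 : M+1+ℓ-q = M+(ℓ+1)-q := by omega
          rw [ex2, ey2]
          simp only [zero_smul, smul_zero, mul_zero, zero_mul, sub_zero, zero_sub]
          module
      · have ey1 : M+ℓ-q+1 = M+(ℓ+1)-q := by omega
        rw [ey1, ex1]
        rcases N with _ | n
        · simp only [Nat.cast_zero, mul_zero, zero_smul, smul_zero, zero_mul, sub_zero]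
          module
        · rw [Nat.add_sub_cancel]
          have ex2 : n+p-ℓ = n+1+p-(ℓ+1) := by omega
          have ey2 : M+1+ℓ-q = M+(ℓ+1)-q := by omega
          rw [ex2, ey2]
          module

/-- Linear independence of the basis of Ψ (basis claim of Theorem 4.1): for `ε ≠ 0`,
the family `{η(p,q,ℓ) : ℓ ≤ p+q}` is linearly independent over ℂ in `E`. -/
theorem eta_linear_independent (ε : ℝ) (hε : ε ≠ 0) :
    LinearIndependent ℂ
      (fun t : {t : ℕ × ℕ × ℕ // t.2.2 ≤ t.1 + t.2.1} =>
        eta ε t.1.1 t.1.2.1 t.1.2.2) := by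
  classical
  have hεC : (ε : ℂ) ≠ 0 := by exact_mod_cast Complex.ofReal_ne_zero.2 hε
  rw [linearIndependent_iff']
  intro s
  induction s using Finset.strongInduction with
  | _ s IH =>
    intro g hsum i hi
    -- the group of i
    set G := s.filter (fun j => (j.1.1 : ℤ) - j.1.2.2 = (i.1.1 : ℤ) - i.1.2.2 ∧
        (j.1.2.1 : ℤ) - j.1.2.2 = (i.1.2.1 : ℤ) - i.1.2.2) with hGdef
    have hiG : i ∈ G := by
      rw [hGdef, Finset.mem_filter]
      exact ⟨hi, rfl, rfl⟩
    obtain ⟨istar, hstarG, hmin⟩ := G.exists_min_image (fun j => j.1.2.2) ⟨i, hiG⟩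
    obtain ⟨hstar_s, hg1, hg2⟩ := Finset.mem_filter.1 hstarG
    set pS := istar.1.1 with hpS
    set qS := istar.1.2.1 with hqS
    set lS := istar.1.2.2 with hlS
    have hls : lS ≤ pS + qS := istar.2
    set N := min lS qS with hN
    set M := qS - lS with hM
    set A := N + pS - lS with hA
    set B := M + lS - qS with hB
    have hNpS : lS ≤ N + pS := by omega
    have hMlS : qS ≤ M + lS := by omega
    -- evaluate the sum at mon N M and take the coefficient at fd A B
    have h0 : (∑ j ∈ s, g j • eta ε j.1.1 j.1.2.1 j.1.2.2) (mon N M) = 0 := by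
      rw [hsum]; rfl
    have h1 : ∑ j ∈ s, g j • (eta ε j.1.1 j.1.2.1 j.1.2.2 (mon N M)) = 0 := by
      simpa only [LinearMap.sum_apply, LinearMap.smul_apply] using h0
    have h2 : ∑ j ∈ s, g j * cc ε j.1.1 j.1.2.1 j.1.2.2 N M *
        (if fd (N + j.1.1 - j.1.2.2) (M + j.1.2.2 - j.1.2.1) = fd A B then (1:ℂ) else 0)
        = 0 := by
      have h1' := congrArg (MvPolynomial.coeff (fd A B)) h1
      rw [MvPolynomial.coeff_zero, MvPolynomial.coeff_sum] at h1'
      refine Eq.trans (Finset.sum_congr rfl ?_) h1'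
      intro j _
      rw [etaA, MvPolynomial.coeff_smul, MvPolynomial.coeff_smul, mon,
        MvPolynomial.coeff_monomial]
      simp only [smul_eq_mul, mul_assoc]
    -- all terms except istar vanish
    have hone : ∀ j ∈ s, j ≠ istar → g j * cc ε j.1.1 j.1.2.1 j.1.2.2 N M *
        (if fd (N + j.1.1 - j.1.2.2) (M + j.1.2.2 - j.1.2.1) = fd A B then (1:ℂ) else 0)
        = 0 := by
      intro j hj hne
      by_cases hfd : fd (N + j.1.1 - j.1.2.2) (M + j.1.2.2 - j.1.2.1) = fd A B
      · rw [if_pos hfd, mul_one]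
        obtain ⟨e1, e2⟩ := fd_inj hfd
        have hz : cc ε j.1.1 j.1.2.1 j.1.2.2 N M = 0 := by
          rcases Nat.lt_or_ge (N + j.1.1) j.1.2.2 with hx | hx
          · exact ccL2 ε _ _ _ _ _ hx
          rcases Nat.lt_or_ge (M + j.1.2.2) j.1.2.1 with hy | hy
          · exact ccL1 ε _ _ _ _ _ hy
          -- now exact arithmetic: j is in the same group
          have hgj1 : (j.1.1 : ℤ) - j.1.2.2 = (pS : ℤ) - lS := by omega
          have hgj2 : (j.1.2.1 : ℤ) - j.1.2.2 = (qS : ℤ) - lS := by omega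
          have hjG : j ∈ G := by
            rw [hGdef, Finset.mem_filter]
            refine ⟨hj, by omega, by omega⟩
          have hminj : lS ≤ j.1.2.2 := hmin j hjG
          have hlne : j.1.2.2 ≠ lS := by
            intro hll
            apply hne
            have hp : j.1.1 = pS := by omega
            have hq : j.1.2.1 = qS := by omega
            apply Subtype.ext
            exact Prod.ext hp (Prod.ext hq hll)
          have hlgt : lS < j.1.2.2 := by omega
          rcases le_or_gt lS qS with hc | hc
          · -- N = lS, M + lj = qj
            have hMl : M + j.1.2.2 = j.1.2.1 := by omega
            rw [ccA ε _ _ _ _ _ (le_of_eq hMl)]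
            have : (N.descFactorial j.1.2.2 : ℂ) = 0 := by
              norm_cast
              exact Nat.descFactorial_eq_zero_iff_lt.2 (by omega)
            rw [this]
            ring
          · -- N = qS, M = 0, N + M < qj
            exact ccB0 ε _ _ _ _ _ (by omega)
        rw [hz]; ring
      · rw [if_neg hfd]; ring
    have hS := Finset.sum_eq_single_of_mem istar hstar_s hone
    rw [h2] at hS
    have hself : fd (N + pS - lS) (M + lS - qS) = fd A B := rfl
    rw [hself, if_pos rfl, mul_one] at hS
    -- cc at istar is nonzero
    have hcc : cc ε pS qS lS N M ≠ 0 := by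
      rcases le_or_gt lS qS with hc | hc
      · have hMl : M + lS = qS := by omega
        have hNl : N = lS := by omega
        rw [ccA ε _ _ _ _ _ (le_of_eq hMl), hMl, hNl, Nat.descFactorial_self,
          Nat.descFactorial_self]
        apply mul_ne_zero
        apply mul_ne_zero
        apply mul_ne_zero
        · exact pow_ne_zero _ (by norm_num)
        · exact pow_ne_zero _ hεC
        · exact_mod_cast Nat.factorial_ne_zero lS
        · exact_mod_cast Nat.factorial_ne_zero qS
      · have hNM : N + M = qS := by omega
        rw [ccB ε _ _ _ _ _ hNM]
        have hNq : N = qS := by omega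
        rw [hNq]
        apply mul_ne_zero
        apply mul_ne_zero
        apply mul_ne_zero
        apply mul_ne_zero
        apply mul_ne_zero
        · exact pow_ne_zero _ (by norm_num)
        · exact pow_ne_zero _ hεC
        · exact_mod_cast Nat.pos_iff_ne_zero.1 (Nat.choose_pos (le_of_lt hc)) -- choose ≠ 0
        · exact_mod_cast Nat.factorial_ne_zero qS
        · exact_mod_cast Nat.factorial_ne_zero qS
        · -- descFactorial pS (lS - qS) ≠ 0
          have : ¬ (pS < lS - qS) := by omega
          exact_mod_cast fun h => this (Nat.descFactorial_eq_zero_iff_lt.1 (by exact_mod_cast h))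
    have hgstar : g istar = 0 := by
      rcases mul_eq_zero.1 (hS.symm) with h | h
      · exact h
      · exact absurd h hcc
    -- induction on the smaller set
    have hsum' : ∑ j ∈ s.erase istar, g j • eta ε j.1.1 j.1.2.1 j.1.2.2 = 0 := by
      rw [← Finset.add_sum_erase s (fun j => g j • eta ε j.1.1 j.1.2.1 j.1.2.2) hstar_s] at hsum
      simpa [hgstar] using hsum
    have hall := IH (s.erase istar) (Finset.erase_ssubset hstar_s) g hsum'
    rcases eq_or_ne i istar with he | hne
    · rw [he]; exact hgstar
    · exact hall i (Finset.mem_erase.2 ⟨hne, hi⟩)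
end
end
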